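/- arXiv:2406.05280 — 8 statements merged into one kernel-verified Lean document; each statement's English description precedes it below -/
import Mathlib

section
/- Let ε > 0 and let φ_ε : [0,∞) → ℝ be defined by φ_ε(x) = (1 − x/ε)² for 0 ≤ x ≤ ε and φ_ε(x) = 0 for x > ε. Then for all real numbers 0 < ω₁ ≤ ω₂ ≤ ω₃ ≤ ε one has φ_ε(ω₃ + ω₂ − ω₁) + φ_ε(ω₃ − ω₂ + ω₁) − 2 φ_ε(ω₃) ≥ (ω₂ − ω₁)² / ε². -/
open Set

/-- The truncated quadratic test function `φ_ε`: equal to `(1 - x/ε)²` for `0 ≤ x ≤ ε`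
and `0` for `x > ε`. -/
noncomputable def phiEps (ε x : ℝ) : ℝ := if x ≤ ε then (1 - x / ε) ^ 2 else 0

theorem stmt0 (ε : ℝ) (hε : 0 < ε) (ω₁ ω₂ ω₃ : ℝ)
    (h1 : 0 < ω₁) (h12 : ω₁ ≤ ω₂) (h23 : ω₂ ≤ ω₃) (h3 : ω₃ ≤ ε) :
    (ω₂ - ω₁) ^ 2 / ε ^ 2 ≤
      phiEps ε (ω₃ + ω₂ - ω₁) + phiEps ε (ω₃ - ω₂ + ω₁) - 2 * phiEps ε ω₃ := by
  have hb : ω₃ - ω₂ + ω₁ ≤ ε := by linarith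
  have hε2 : (0:ℝ) < ε ^ 2 := by positivity
  rw [phiEps, phiEps, phiEps, if_pos hb, if_pos h3]
  by_cases ha : ω₃ + ω₂ - ω₁ ≤ ε
  · rw [if_pos ha]
    rw [div_le_iff₀ hε2]
    have e1 : (1 - (ω₃ + ω₂ - ω₁) / ε) = (ε - (ω₃ + ω₂ - ω₁)) / ε := by field_simp
    have e2 : (1 - (ω₃ - ω₂ + ω₁) / ε) = (ε - (ω₃ - ω₂ + ω₁)) / ε := by field_simp
    have e3 : (1 - ω₃ / ε) = (ε - ω₃) / ε := by field_simp
    rw [e1, e2, e3, div_pow, div_pow, div_pow]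
    rw [show ((ε - (ω₃ + ω₂ - ω₁)) ^ 2 / ε ^ 2 + (ε - (ω₃ - ω₂ + ω₁)) ^ 2 / ε ^ 2 -
        2 * ((ε - ω₃) ^ 2 / ε ^ 2)) = ((ε - (ω₃ + ω₂ - ω₁)) ^ 2 + (ε - (ω₃ - ω₂ + ω₁)) ^ 2 -
        2 * (ε - ω₃) ^ 2) / ε ^ 2 by ring]
    rw [div_mul_cancel₀ _ (ne_of_gt hε2)]
    nlinarith [sq_nonneg (ω₂ - ω₁)]
  · rw [if_neg ha]
    push_neg at ha
    rw [div_le_iff₀ hε2]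
    have e2 : (1 - (ω₃ - ω₂ + ω₁) / ε) = (ε - (ω₃ - ω₂ + ω₁)) / ε := by field_simp
    have e3 : (1 - ω₃ / ε) = (ε - ω₃) / ε := by field_simp
    rw [e2, e3, div_pow, div_pow]
    rw [show (0 + (ε - (ω₃ - ω₂ + ω₁)) ^ 2 / ε ^ 2 - 2 * ((ε - ω₃) ^ 2 / ε ^ 2)) =
        ((ε - (ω₃ - ω₂ + ω₁)) ^ 2 - 2 * (ε - ω₃) ^ 2) / ε ^ 2 by ring]
    rw [div_mul_cancel₀ _ (ne_of_gt hε2)]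
    nlinarith [sq_nonneg (ε - ω₃), mul_nonneg (sub_nonneg.2 h3) (by linarith : (0:ℝ) ≤ ω₂ - ω₁ - (ε - ω₃))]
end

section
/- Let g be a finite nonnegative Borel measure on [0,∞) with g({0}) = 0, and let α ≥ 0 and ε > 0. Then √(N_α(g,ε)) ≤ ∫₀¹ σ^{α/2 − 1} √(A_α(g, εσ)) dσ, where both sides are interpreted in [0,∞]. -/
open MeasureTheory Set
open scoped ENNReal

/-!
For `0 < x ≤ ε` write `1 - x/ε = ∫_{x/ε}^1 (x/ε) σ⁻² dσ`; since `g {0} = 0` this expresses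
`N₀(g,ε)` as the squared `L²(g|[0,ε])`-norm of a `σ`-integral over `(0,1]`. Minkowski's integral
inequality moves the `L²(g)`-norm inside the `σ`-integral, and for fixed `σ` the `L²(g)`-norm of
the kernel is `σ⁻¹ (∫_{[0,εσ]} (x/εσ)² dg)^{1/2}`. Multiplying by `ε^{-α/2}` turns this into
`σ^{α/2-1} √A_α(g,εσ)`.
-/

/-- `N₀(g,ε) = ∫_{[0,ε]} (1 - x/ε)² dg(x)`, valued in `[0,∞]`. -/
noncomputable def N0e (g : Measure ℝ) (ε : ℝ) : ℝ≥0∞ :=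
  ∫⁻ x in Icc (0:ℝ) ε, ENNReal.ofReal ((1 - x / ε) ^ 2) ∂g

/-- `N_α(g,ε) = ε^{-α} N₀(g,ε)`, valued in `[0,∞]`. -/
noncomputable def NalphaE (g : Measure ℝ) (α ε : ℝ) : ℝ≥0∞ :=
  ENNReal.ofReal (ε ^ (-α)) * N0e g ε

/-- `A_α(g,ε) = ε^{-α} ∫_{[0,ε]} (x/ε)² dg(x)`, valued in `[0,∞]`. -/
noncomputable def Ae (g : Measure ℝ) (α ε : ℝ) : ℝ≥0∞ :=
  ENNReal.ofReal (ε ^ (-α)) * ∫⁻ x in Icc (0:ℝ) ε, ENNReal.ofReal ((x / ε) ^ 2) ∂g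

theorem ENNReal.sq_rpow_half (a : ℝ≥0∞) : (a ^ 2) ^ (1 / 2 : ℝ) = a := by
  rw [← ENNReal.rpow_two, ← ENNReal.rpow_mul]
  norm_num

theorem ENNReal.le_of_sq_le_mul {s t : ℝ≥0∞} (hs : s ≠ ∞) (h : s ^ 2 ≤ s * t) : s ≤ t := by
  rcases eq_or_ne s 0 with rfl | hs0
  · exact zero_le
  · rw [sq] at h
    exact (ENNReal.mul_le_mul_iff_right hs0 hs).1 h

section Minkowski

variable {X Y : Type*} [MeasurableSpace X] [MeasurableSpace Y] {μ : Measure X} {ν : Measure Y}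
  [SFinite μ] [SFinite ν]

/-- Minkowski's integral inequality for the exponent `2`. -/
theorem lintegral_sq_lintegral_rpow_half_le {H : X → Y → ℝ≥0∞}
    (hH : Measurable (Function.uncurry H)) (hfin : ∫⁻ x, (∫⁻ y, H x y ∂ν) ^ 2 ∂μ ≠ ∞) :
    (∫⁻ x, (∫⁻ y, H x y ∂ν) ^ 2 ∂μ) ^ (1 / 2 : ℝ) ≤
      ∫⁻ y, (∫⁻ x, H x y ^ 2 ∂μ) ^ (1 / 2 : ℝ) ∂ν := by
  set Φ : X → ℝ≥0∞ := fun x => ∫⁻ y, H x y ∂ν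
  have hΦ : Measurable Φ := hH.lintegral_prod_right'
  set S := ∫⁻ x, Φ x ^ 2 ∂μ
  refine ENNReal.le_of_sq_le_mul (ENNReal.rpow_ne_top_of_nonneg (by norm_num) hfin) ?_
  calc (S ^ (1 / 2 : ℝ)) ^ 2 = ∫⁻ x, ∫⁻ y, Φ x * H x y ∂ν ∂μ := by
        rw [← ENNReal.rpow_two, ← ENNReal.rpow_mul, show (1 / 2 : ℝ) * 2 = 1 by norm_num,
          ENNReal.rpow_one]
        refine lintegral_congr fun x => ?_
        rw [lintegral_const_mul _ hH.of_uncurry_left, sq]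
    _ = ∫⁻ y, ∫⁻ x, Φ x * H x y ∂μ ∂ν :=
        lintegral_lintegral_swap ((hΦ.comp measurable_fst).mul hH).aemeasurable
    _ ≤ ∫⁻ y, S ^ (1 / 2 : ℝ) * (∫⁻ x, H x y ^ 2 ∂μ) ^ (1 / 2 : ℝ) ∂ν := by
        gcongr with y
        simpa [ENNReal.rpow_two] using ENNReal.lintegral_mul_le_Lp_mul_Lq μ
          Real.HolderConjugate.two_two hΦ.aemeasurable hH.of_uncurry_right.aemeasurable
    _ = S ^ (1 / 2 : ℝ) * ∫⁻ y, (∫⁻ x, H x y ^ 2 ∂μ) ^ (1 / 2 : ℝ) ∂ν :=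
        lintegral_const_mul' _ _ (ENNReal.rpow_ne_top_of_nonneg (by norm_num) hfin)

end Minkowski

theorem integral_div_sq_eq_one_sub {t : ℝ} (ht0 : 0 < t) (ht1 : t ≤ 1) :
    ∫ σ in t..1, t / σ ^ 2 = 1 - t := by
  have hpos : ∀ σ ∈ uIcc t 1, σ ≠ 0 := fun σ hσ =>
    (ht0.trans_le (uIcc_of_le ht1 ▸ hσ).1).ne'
  have hderiv : ∀ σ ∈ uIcc t 1, HasDerivAt (fun σ => -t * σ⁻¹) (t / σ ^ 2) σ := fun σ hσ => by
    simpa [div_eq_mul_inv] using (hasDerivAt_inv (hpos σ hσ)).const_mul (-t)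
  have hcont : ContinuousOn (fun σ : ℝ => t / σ ^ 2) (uIcc t 1) :=
    continuousOn_const.div (continuousOn_id.pow 2) fun σ hσ => pow_ne_zero 2 (hpos σ hσ)
  rw [intervalIntegral.integral_eq_sub_of_hasDerivAt hderiv hcont.intervalIntegrable]
  field_simp
  ring

/-- The kernel of the identity `1 - t = ∫_t^1 t σ⁻² dσ`. -/
noncomputable def oneSubKernel (t σ : ℝ) : ℝ≥0∞ :=
  if t ≤ σ then ENNReal.ofReal (t / σ ^ 2) else 0

theorem measurable_oneSubKernel : Measurable (Function.uncurry oneSubKernel) :=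
  Measurable.ite (measurableSet_le measurable_fst measurable_snd)
    (ENNReal.measurable_ofReal.comp (measurable_fst.div (measurable_snd.pow_const 2)))
    measurable_const

theorem setLIntegral_oneSubKernel {t : ℝ} (ht0 : 0 < t) (ht1 : t ≤ 1) :
    ∫⁻ σ in Ioc 0 1, oneSubKernel t σ = ENNReal.ofReal (1 - t) := by
  have hcont : ContinuousOn (fun σ : ℝ => t / σ ^ 2) (Icc t 1) :=
    continuousOn_const.div (continuousOn_id.pow 2) fun σ hσ => by
      have := ht0.trans_le hσ.1; positivity
  have hset : Ici t ∩ Ioc 0 1 = Icc t 1 := by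
    ext σ
    simp only [mem_inter_iff, mem_Ici, mem_Ioc, mem_Icc]
    constructor
    · rintro ⟨h1, -, h3⟩; exact ⟨h1, h3⟩
    · rintro ⟨h1, h2⟩; exact ⟨h1, ht0.trans_le h1, h2⟩
  have hind : oneSubKernel t = (Ici t).indicator fun σ => ENNReal.ofReal (t / σ ^ 2) := by
    ext σ; simp [oneSubKernel, indicator_apply]
  rw [hind, lintegral_indicator measurableSet_Ici, Measure.restrict_restrict measurableSet_Ici,
    hset, ← ofReal_integral_eq_lintegral_ofReal (hcont.integrableOn_compact isCompact_Icc)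
      (ae_of_all _ fun σ => by positivity), integral_Icc_eq_integral_Ioc,
    ← intervalIntegral.integral_of_le ht1, integral_div_sq_eq_one_sub ht0 ht1]

theorem setLIntegral_oneSubKernel_div_sq (g : Measure ℝ) {ε σ : ℝ} (hε : 0 < ε)
    (hσ : σ ∈ Ioc 0 1) :
    ∫⁻ x in Icc 0 ε, oneSubKernel (x / ε) σ ^ 2 ∂g =
      ENNReal.ofReal σ⁻¹ ^ 2 * ∫⁻ x in Icc 0 (ε * σ), ENNReal.ofReal ((x / (ε * σ)) ^ 2) ∂g := by
  obtain ⟨hσ0, hσ1⟩ := hσ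
  have hpt : ∀ x ∈ Icc 0 ε, oneSubKernel (x / ε) σ ^ 2 = (Icc 0 (ε * σ)).indicator
      (fun x => ENNReal.ofReal σ⁻¹ ^ 2 * ENNReal.ofReal ((x / (ε * σ)) ^ 2)) x := by
    rintro x ⟨hx0, -⟩
    have hle : x / ε ≤ σ ↔ x ∈ Icc 0 (ε * σ) := by
      rw [div_le_iff₀ hε, mul_comm σ]; simp [hx0]
    by_cases h : x / ε ≤ σ
    · rw [oneSubKernel, if_pos h, indicator_of_mem (hle.1 h),
        ← ENNReal.ofReal_pow (by positivity), ← ENNReal.ofReal_pow (by positivity),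
        ← ENNReal.ofReal_mul (by positivity)]
      congr 1
      field_simp
    · rw [oneSubKernel, if_neg h, indicator_of_notMem (mt hle.2 h), zero_pow two_ne_zero]
  rw [setLIntegral_congr_fun measurableSet_Icc hpt, lintegral_indicator measurableSet_Icc,
    Measure.restrict_restrict measurableSet_Icc,
    inter_eq_left.2 (Icc_subset_Icc_right (mul_le_of_le_one_right hε.le hσ1)),
    lintegral_const_mul' _ _ (by finiteness)]

theorem N0e_eq_setLIntegral_sq_setLIntegral_oneSubKernel {g : Measure ℝ} (h0 : g {0} = 0)
    {ε : ℝ} (hε : 0 < ε) :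
    N0e g ε = ∫⁻ x in Icc 0 ε, (∫⁻ σ in Ioc 0 1, oneSubKernel (x / ε) σ) ^ 2 ∂g := by
  refine setLIntegral_congr_fun_ae measurableSet_Icc ?_
  filter_upwards [measure_eq_zero_iff_ae_notMem.1 h0] with x hx0 hx
  have hxε : x / ε ≤ 1 := (div_le_one hε).2 hx.2
  rw [setLIntegral_oneSubKernel (div_pos (hx.1.lt_of_ne' hx0) hε) hxε,
    ENNReal.ofReal_pow (sub_nonneg.2 hxε)]

theorem N0e_ne_top (g : Measure ℝ) [IsFiniteMeasure g] {ε : ℝ} (hε : 0 < ε) : N0e g ε ≠ ∞ := by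
  refine ne_top_of_le_ne_top (measure_ne_top g (Icc 0 ε)) ?_
  rw [N0e, ← setLIntegral_one]
  refine setLIntegral_mono measurable_const fun x hx => ENNReal.ofReal_le_one.2 ?_
  have hxε : x / ε ≤ 1 := (div_le_one hε).2 hx.2
  exact pow_le_one₀ (sub_nonneg.2 hxε) (by linarith [div_nonneg hx.1 hε.le])

theorem ENNReal.ofReal_rpow_mul_rpow_half {δ : ℝ} (hδ : 0 ≤ δ) (β : ℝ) (a : ℝ≥0∞) :
    (ENNReal.ofReal (δ ^ β) * a) ^ (1 / 2 : ℝ) =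
      ENNReal.ofReal (δ ^ (β / 2)) * a ^ (1 / 2 : ℝ) := by
  rw [ENNReal.mul_rpow_of_nonneg _ _ (by norm_num),
    ENNReal.ofReal_rpow_of_nonneg (by positivity) (by norm_num), ← Real.rpow_mul hδ, mul_one_div]

theorem ofReal_rpow_mul_Ae_rpow_half (g : Measure ℝ) (α : ℝ) {ε σ : ℝ} (hε : 0 < ε)
    (hσ : σ ∈ Ioc 0 1) :
    ENNReal.ofReal (σ ^ (α / 2 - 1)) * Ae g α (ε * σ) ^ (1 / 2 : ℝ) =
      ENNReal.ofReal (ε ^ (-α / 2)) *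
        (∫⁻ x in Icc 0 ε, oneSubKernel (x / ε) σ ^ 2 ∂g) ^ (1 / 2 : ℝ) := by
  have hσ0 := hσ.1
  have hpow : σ ^ (α / 2 - 1) * (ε * σ) ^ (-α / 2) = ε ^ (-α / 2) * σ⁻¹ := by
    rw [Real.mul_rpow hε.le hσ0.le, Real.rpow_sub hσ0, Real.rpow_one, neg_div,
      Real.rpow_neg hε.le, Real.rpow_neg hσ0.le]
    field_simp
  rw [Ae, ENNReal.ofReal_rpow_mul_rpow_half (by positivity),
    setLIntegral_oneSubKernel_div_sq g hε hσ,
    ENNReal.mul_rpow_of_nonneg _ _ (by norm_num), ENNReal.sq_rpow_half, ← mul_assoc, ← mul_assoc,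
    ← ENNReal.ofReal_mul (by positivity), ← ENNReal.ofReal_mul (by positivity), hpow]

theorem stmt2_general (g : Measure ℝ) [IsFiniteMeasure g]
    (h0 : g ({0} : Set ℝ) = 0) (α ε : ℝ) (hε : 0 < ε) :
    (NalphaE g α ε) ^ (1/2 : ℝ) ≤
      ∫⁻ σ in Ioc (0:ℝ) 1,
        ENNReal.ofReal (σ ^ (α / 2 - 1)) * (Ae g α (ε * σ)) ^ (1/2 : ℝ) := by
  have hH : Measurable (Function.uncurry fun x σ => oneSubKernel (x / ε) σ) :=
    measurable_oneSubKernel.comp ((measurable_fst.div_const ε).prodMk measurable_snd)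
  have hN0 := N0e_eq_setLIntegral_sq_setLIntegral_oneSubKernel h0 hε
  have hmink := lintegral_sq_lintegral_rpow_half_le (μ := g.restrict (Icc 0 ε))
    (ν := volume.restrict (Ioc 0 1)) hH (hN0 ▸ N0e_ne_top g hε)
  rw [← hN0] at hmink
  rw [NalphaE, ENNReal.ofReal_rpow_mul_rpow_half hε.le,
    setLIntegral_congr_fun measurableSet_Ioc fun σ hσ => ofReal_rpow_mul_Ae_rpow_half g α hε hσ,
    lintegral_const_mul' _ _ ENNReal.ofReal_ne_top]
  exact mul_le_mul_right hmink _

theorem stmt2 (g : Measure ℝ) [IsFiniteMeasure g] (hsupp : g (Iio (0:ℝ)) = 0)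
    (h0 : g ({0} : Set ℝ) = 0) (α ε : ℝ) (hα : 0 ≤ α) (hε : 0 < ε) :
    (NalphaE g α ε) ^ (1/2 : ℝ) ≤
      ∫⁻ σ in Ioc (0:ℝ) 1,
        ENNReal.ofReal (σ ^ (α / 2 - 1)) * (Ae g α (ε * σ)) ^ (1/2 : ℝ) :=
  stmt2_general g h0 α ε hε
end

section
/- Let g be a nonnegative Borel measure on (0,∞) and let ε > 0, γ > 0, β > 0. Set χ(ω₂,ω₃) = 2 if ω₂ < ω₃ and χ(ω₂,ω₃) = 1 if ω₂ = ω₃. Then (∫_{(0,ε)} ω^γ dg(ω))² ≤ ε^{γ+β} ∬_{0<ω₂≤ω₃<ε} χ(ω₂,ω₃) ω₂^γ ω₃^{−β} dg(ω₂) dg(ω₃). -/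
open MeasureTheory Set
open scoped ENNReal

theorem stmt3 (g : Measure ℝ) [SFinite g] (hsupp : g (Iic (0:ℝ)) = 0)
    (ε γ β : ℝ) (hε : 0 < ε) (hγ : 0 < γ) (hβ : 0 < β) :
    (∫⁻ ω in Ioo (0:ℝ) ε, ENNReal.ofReal (ω ^ γ) ∂g) ^ 2 ≤
      ENNReal.ofReal (ε ^ (γ + β)) *
        ∫⁻ q in {q : ℝ × ℝ | 0 < q.1 ∧ q.1 ≤ q.2 ∧ q.2 < ε},
          ENNReal.ofReal ((if q.1 < q.2 then 2 else 1) * q.1 ^ γ * q.2 ^ (-β))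
            ∂(g.prod g) := by
  classical
  set F : ℝ → ℝ≥0∞ := (Ioo (0:ℝ) ε).indicator (fun ω => ENNReal.ofReal (ω ^ γ)) with hFdef
  have hFmeas : Measurable F := by
    apply Measurable.indicator _ measurableSet_Ioo
    exact (measurable_id.pow_const γ).ennreal_ofReal
  set H : ℝ × ℝ → ℝ≥0∞ := fun q => F q.1 * F q.2 with hHdef
  have hHmeas : Measurable H := (hFmeas.comp measurable_fst).mul (hFmeas.comp measurable_snd)
  -- H as an indicator of the square
  have hHind : H = (Ioo (0:ℝ) ε ×ˢ Ioo (0:ℝ) ε).indicator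
      (fun q : ℝ × ℝ => ENNReal.ofReal (q.1 ^ γ) * ENNReal.ofReal (q.2 ^ γ)) := by
    funext q
    by_cases h1 : q.1 ∈ Ioo (0:ℝ) ε <;> by_cases h2 : q.2 ∈ Ioo (0:ℝ) ε
    · simp only [hHdef, hFdef]
      rw [Set.indicator_of_mem h1, Set.indicator_of_mem h2,
        Set.indicator_of_mem (Set.mem_prod.mpr ⟨h1, h2⟩)]
    · simp only [hHdef, hFdef]
      rw [Set.indicator_of_notMem h2,
        Set.indicator_of_notMem (fun h => h2 (Set.mem_prod.mp h).2), mul_zero]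
    · simp only [hHdef, hFdef]
      rw [Set.indicator_of_notMem h1,
        Set.indicator_of_notMem (fun h => h1 (Set.mem_prod.mp h).1), zero_mul]
    · simp only [hHdef, hFdef]
      rw [Set.indicator_of_notMem h1,
        Set.indicator_of_notMem (fun h => h1 (Set.mem_prod.mp h).1), zero_mul]
  -- Step 1: LHS² = ∫ H over product
  have hsq : (∫⁻ ω in Ioo (0:ℝ) ε, ENNReal.ofReal (ω ^ γ) ∂g) ^ 2
      = ∫⁻ q, H q ∂(g.prod g) := by
    rw [← lintegral_indicator measurableSet_Ioo, ← hFdef, sq,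
      ← lintegral_prod_mul hFmeas.aemeasurable hFmeas.aemeasurable]
  -- partition sets
  set A : Set (ℝ × ℝ) := {q | q.1 < q.2} with hAdef
  set B : Set (ℝ × ℝ) := {q | q.2 < q.1} with hBdef
  set D : Set (ℝ × ℝ) := {q | q.1 = q.2} with hDdef
  have hAmeas : MeasurableSet A := measurableSet_lt measurable_fst measurable_snd
  have hBmeas : MeasurableSet B := measurableSet_lt measurable_snd measurable_fst
  have hDmeas : MeasurableSet D := measurableSet_eq_fun measurable_fst measurable_snd
  have hAcompl : Aᶜ = B ∪ D := by
    ext q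
    simp only [hAdef, hBdef, hDdef, Set.mem_compl_iff, Set.mem_setOf_eq, Set.mem_union, not_lt]
    constructor
    · intro h; rcases lt_or_eq_of_le h with h | h
      · exact Or.inl h
      · exact Or.inr h.symm
    · rintro (h | h)
      · exact h.le
      · exact h.ge
  have hBD : Disjoint B D := by
    rw [Set.disjoint_left]
    intro q hq hq'
    simp only [hBdef, Set.mem_setOf_eq] at hq
    simp only [hDdef, Set.mem_setOf_eq] at hq'
    exact ne_of_gt hq hq'
  have hsplit : ∫⁻ q, H q ∂(g.prod g)
      = (∫⁻ q in A, H q ∂(g.prod g)) + (∫⁻ q in B, H q ∂(g.prod g))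
        + (∫⁻ q in D, H q ∂(g.prod g)) := by
    rw [← lintegral_add_compl (fun q => H q) hAmeas, hAcompl, lintegral_union hDmeas hBD,
      add_assoc]
  -- swap symmetry: ∫_B H = ∫_A H
  have hswap : ∫⁻ q in B, H q ∂(g.prod g) = ∫⁻ q in A, H q ∂(g.prod g) := by
    rw [← lintegral_indicator hBmeas, ← lintegral_indicator hAmeas]
    calc ∫⁻ q, B.indicator H q ∂(g.prod g)
        = ∫⁻ q, B.indicator H q ∂(Measure.map Prod.swap (g.prod g)) := by
          rw [Measure.prod_swap]
      _ = ∫⁻ q, B.indicator H (Prod.swap q) ∂(g.prod g) := by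
          rw [lintegral_map (hHmeas.indicator hBmeas) measurable_swap]
      _ = ∫⁻ q, A.indicator H q ∂(g.prod g) := by
          congr 1; funext q
          by_cases hq : q ∈ A
          · have : Prod.swap q ∈ B := hq
            simp [Set.indicator, hq, this, hHdef, mul_comm]
          · have : Prod.swap q ∉ B := hq
            simp [Set.indicator, hq, this]
  set T : Set (ℝ × ℝ) := {q : ℝ × ℝ | 0 < q.1 ∧ q.1 ≤ q.2 ∧ q.2 < ε} with hTdef
  -- A ∩ square = T ∩ A, D ∩ square = T ∩ D
  have hAsq : (Ioo (0:ℝ) ε ×ˢ Ioo (0:ℝ) ε) ∩ A = T ∩ A := by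
    ext q
    simp only [Set.mem_inter_iff, Set.mem_prod, Set.mem_Ioo, hAdef, hTdef, Set.mem_setOf_eq]
    constructor
    · rintro ⟨⟨⟨h1, h2⟩, h3, h4⟩, h5⟩
      exact ⟨⟨h1, h5.le, h4⟩, h5⟩
    · rintro ⟨⟨h1, h2, h3⟩, h4⟩
      exact ⟨⟨⟨h1, lt_of_le_of_lt h2 h3⟩, lt_trans h1 h4, h3⟩, h4⟩
  have hDsq : (Ioo (0:ℝ) ε ×ˢ Ioo (0:ℝ) ε) ∩ D = T ∩ D := by
    ext q
    simp only [Set.mem_inter_iff, Set.mem_prod, Set.mem_Ioo, hDdef, hTdef, Set.mem_setOf_eq]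
    constructor
    · rintro ⟨⟨⟨h1, h2⟩, h3, h4⟩, h5⟩
      exact ⟨⟨h1, h5.le, h4⟩, h5⟩
    · rintro ⟨⟨h1, h2, h3⟩, h4⟩
      exact ⟨⟨⟨h1, lt_of_le_of_lt h2 h3⟩, h4 ▸ h1, h3⟩, h4⟩
  set P : ℝ × ℝ → ℝ≥0∞ := fun q => ENNReal.ofReal (q.1 ^ γ) * ENNReal.ofReal (q.2 ^ γ)
    with hPdef
  have hIA : ∫⁻ q in A, H q ∂(g.prod g) = ∫⁻ q in T ∩ A, P q ∂(g.prod g) := by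
    rw [hHind, setLIntegral_indicator (measurableSet_Ioo.prod measurableSet_Ioo), hAsq]
  have hID : ∫⁻ q in D, H q ∂(g.prod g) = ∫⁻ q in T ∩ D, P q ∂(g.prod g) := by
    rw [hHind, setLIntegral_indicator (measurableSet_Ioo.prod measurableSet_Ioo), hDsq]
  set G : ℝ × ℝ → ℝ≥0∞ := fun q =>
    ENNReal.ofReal ((if q.1 < q.2 then 2 else 1) * q.1 ^ γ * q.2 ^ (-β)) with hGdef
  have hGmeas : Measurable G := by
    apply Measurable.ennreal_ofReal
    exact ((Measurable.ite (measurableSet_lt measurable_fst measurable_snd)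
      measurable_const measurable_const).mul (measurable_fst.pow measurable_const)).mul
      (measurable_snd.pow measurable_const)
  set c : ℝ≥0∞ := ENNReal.ofReal (ε ^ (γ + β)) with hcdef
  have hεγβ : (0:ℝ) ≤ ε ^ (γ + β) := Real.rpow_nonneg hε.le _
  -- pointwise key inequality on T
  have hkey : ∀ q ∈ T, q.2 ^ γ ≤ ε ^ (γ + β) * q.2 ^ (-β) := by
    rintro q ⟨h1, h2, h3⟩
    have h2pos : 0 < q.2 := lt_of_lt_of_le h1 h2
    have : q.2 ^ γ = q.2 ^ (γ + β) * q.2 ^ (-β) := by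
      rw [← Real.rpow_add h2pos]; ring_nf
    rw [this]
    exact mul_le_mul_of_nonneg_right
      (Real.rpow_le_rpow h2pos.le h3.le (by linarith))
      (Real.rpow_nonneg h2pos.le _)
  have hboundA : (2:ℝ≥0∞) * ∫⁻ q in T ∩ A, P q ∂(g.prod g)
      ≤ ∫⁻ q in T ∩ A, c * G q ∂(g.prod g) := by
    rw [← lintegral_const_mul _ ((by fun_prop : Measurable P))]
    refine setLIntegral_mono (measurable_const.mul hGmeas) ?_
    rintro q ⟨hT, hA⟩
    have hq1 : (0:ℝ) < q.1 := hT.1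
    have hq2 : (0:ℝ) < q.2 := lt_of_lt_of_le hq1 hT.2.1
    have hlt : q.1 < q.2 := hA
    simp only [hPdef, hGdef, hcdef, if_pos hlt]
    rw [← ENNReal.ofReal_mul (Real.rpow_nonneg hq1.le _), ← ENNReal.ofReal_ofNat,
      ← ENNReal.ofReal_mul (by norm_num), ← ENNReal.ofReal_mul hεγβ]
    apply ENNReal.ofReal_le_ofReal
    have hk := hkey q hT
    have h1n : (0:ℝ) ≤ q.1 ^ γ := Real.rpow_nonneg hq1.le _
    have key2 : q.1 ^ γ * q.2 ^ γ ≤ q.1 ^ γ * (ε ^ (γ + β) * q.2 ^ (-β)) :=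
      mul_le_mul_of_nonneg_left hk h1n
    calc 2 * (q.1 ^ γ * q.2 ^ γ)
        ≤ 2 * (q.1 ^ γ * (ε ^ (γ + β) * q.2 ^ (-β))) := by linarith
      _ = ε ^ (γ + β) * (2 * q.1 ^ γ * q.2 ^ (-β)) := by ring
  have hboundD : ∫⁻ q in T ∩ D, P q ∂(g.prod g)
      ≤ ∫⁻ q in T ∩ D, c * G q ∂(g.prod g) := by
    refine setLIntegral_mono (measurable_const.mul hGmeas) ?_
    rintro q ⟨hT, hD⟩
    have hq1 : (0:ℝ) < q.1 := hT.1
    have hq2 : (0:ℝ) < q.2 := lt_of_lt_of_le hq1 hT.2.1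
    have hnlt : ¬ q.1 < q.2 := by rw [hD]; exact lt_irrefl _
    simp only [hPdef, hGdef, hcdef, if_neg hnlt]
    rw [← ENNReal.ofReal_mul (Real.rpow_nonneg hq1.le _),
      ← ENNReal.ofReal_mul hεγβ]
    apply ENNReal.ofReal_le_ofReal
    have hk := hkey q hT
    have h1n : (0:ℝ) ≤ q.1 ^ γ := Real.rpow_nonneg hq1.le _
    have key2 : q.1 ^ γ * q.2 ^ γ ≤ q.1 ^ γ * (ε ^ (γ + β) * q.2 ^ (-β)) :=
      mul_le_mul_of_nonneg_left hk h1n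
    calc q.1 ^ γ * q.2 ^ γ
        ≤ q.1 ^ γ * (ε ^ (γ + β) * q.2 ^ (-β)) := key2
      _ = ε ^ (γ + β) * (1 * q.1 ^ γ * q.2 ^ (-β)) := by ring
  have hTmeas : MeasurableSet T := by
    apply MeasurableSet.inter
    · exact measurableSet_lt measurable_const measurable_fst
    · exact MeasurableSet.inter (measurableSet_le measurable_fst measurable_snd)
        (measurableSet_lt measurable_snd measurable_const)
  have hTunion : T = (T ∩ A) ∪ (T ∩ D) := by
    ext q
    simp only [hTdef, hAdef, hDdef, Set.mem_union, Set.mem_inter_iff, Set.mem_setOf_eq]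
    constructor
    · intro h
      rcases lt_or_eq_of_le h.2.1 with h' | h'
      · exact Or.inl ⟨h, h'⟩
      · exact Or.inr ⟨h, h'⟩
    · rintro (⟨h, _⟩ | ⟨h, _⟩) <;> exact h
  have hTsplit : ∫⁻ q in T, c * G q ∂(g.prod g)
      = (∫⁻ q in T ∩ A, c * G q ∂(g.prod g)) + ∫⁻ q in T ∩ D, c * G q ∂(g.prod g) := by
    nth_rewrite 1 [hTunion]
    exact lintegral_union (hTmeas.inter hDmeas)
      (Set.disjoint_left.mpr (by
        rintro q ⟨_, hqA⟩ ⟨_, hqD⟩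
        exact absurd hqD (ne_of_lt hqA)))
  have hGconst : ∫⁻ q in T, c * G q ∂(g.prod g) = c * ∫⁻ q in T, G q ∂(g.prod g) := by
    exact lintegral_const_mul c hGmeas
  calc (∫⁻ ω in Ioo (0:ℝ) ε, ENNReal.ofReal (ω ^ γ) ∂g) ^ 2
      = (∫⁻ q in A, H q ∂(g.prod g)) + (∫⁻ q in B, H q ∂(g.prod g))
        + ∫⁻ q in D, H q ∂(g.prod g) := by rw [hsq, hsplit]
    _ = 2 * (∫⁻ q in T ∩ A, P q ∂(g.prod g)) + ∫⁻ q in T ∩ D, P q ∂(g.prod g) := by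
        rw [hswap, hIA, hID]; ring
    _ ≤ (∫⁻ q in T ∩ A, c * G q ∂(g.prod g)) + ∫⁻ q in T ∩ D, c * G q ∂(g.prod g) :=
        add_le_add hboundA hboundD
    _ = c * ∫⁻ q in T, G q ∂(g.prod g) := by rw [← hTsplit, hGconst]
end

section
/- Let C₀ > 0 and let K : ℝ → ℝ be measurable with |K(x) − 4x e^{−5x/2}| ≤ C₀ e^{−5x/2} for all x ≥ 0 and |K(x)| ≤ C₀ (1+|x|) e^{x} for all x ≤ 0. Then the convolution (K∗K)(x) = ∫_ℝ K(x−y) K(y) dy is absolutely convergent for every x, and there exist constants C > 0 and x₀ > 0 such that |(K∗K)(x) − (8/3) x³ e^{−5x/2}| ≤ C x² e^{−5x/2} for all x ≥ x₀. -/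
/-!
On `0 < y ≤ x` both factors are in the asymptotic regime: the product of the leading terms,
`16 (x - y) y e^{-5x/2}`, integrates to `(8/3) x³ e^{-5x/2}`, and the error terms are
`O(x e^{-5x/2})` pointwise, hence `O(x² e^{-5x/2})` after integration. The tails `y ≤ 0` and
`y ≥ x` are exchanged by `y ↦ x - y`; on them one factor is `O(x e^{-5(x-y)/2})` and the other
`O(|y| e^{y})`, so they contribute only `O(x e^{-5x/2})`. Absolute convergence holds because `K`
is bounded and integrable, being `O(e^{-|t|/2})`.
-/

open MeasureTheory Set Real

def HasRightAsymptotics (C₀ : ℝ) (K : ℝ → ℝ) : Prop :=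
  ∀ x : ℝ, 0 ≤ x → |K x - 4 * x * exp (-(5 * x) / 2)| ≤ C₀ * exp (-(5 * x) / 2)

def HasLeftDecay (C₀ : ℝ) (K : ℝ → ℝ) : Prop :=
  ∀ x : ℝ, x ≤ 0 → |K x| ≤ C₀ * (1 + |x|) * exp x

lemma one_add_le_two_mul_exp_half (u : ℝ) : 1 + u ≤ 2 * exp (u / 2) := by
  linarith [add_one_le_exp (u / 2)]

lemma one_add_sq_le_four_mul_exp {u : ℝ} (hu : -1 ≤ u) : (1 + u) ^ 2 ≤ 4 * exp u := by
  have h := one_add_le_two_mul_exp_half u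
  calc (1 + u) ^ 2 ≤ (2 * exp (u / 2)) ^ 2 := pow_le_pow_left₀ (by linarith) h 2
    _ = 4 * exp u := by rw [mul_pow, sq (exp _), ← exp_add, add_halves]; norm_num

lemma integrable_exp_neg_mul_abs {c : ℝ} (hc : 0 < c) :
    Integrable fun t : ℝ => exp (-(c * |t|)) := by
  have hIoi : IntegrableOn (fun t : ℝ => exp (-(c * |t|))) (Ioi 0) :=
    (exp_neg_integrableOn_Ioi 0 hc).congr_fun
      (fun t ht => by simp [abs_of_pos (mem_Ioi.mp ht)]) measurableSet_Ioi
  have hIic : IntegrableOn (fun t : ℝ => exp (-(c * |t|))) (Iic 0) := by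
    rw [← Measure.map_neg_eq_self (volume : Measure ℝ),
      measurableEmbedding_neg.integrableOn_map_iff]
    simp_rw [Function.comp_def, abs_neg, neg_preimage, neg_Iic, neg_zero]
    exact (integrableOn_Ici_iff_integrableOn_Ioi).2 hIoi
  simpa using hIic.union hIoi

lemma integral_Ioc_sub_mul_self {x : ℝ} (hx : 0 ≤ x) :
    ∫ y in Ioc 0 x, (x - y) * y = x ^ 3 / 6 := by
  have hpoly : ∀ y : ℝ, (x - y) * y = x * y - y ^ 2 := fun y => by ring
  rw [← intervalIntegral.integral_of_le hx]
  simp_rw [hpoly]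
  rw [intervalIntegral.integral_sub ((by fun_prop : Continuous _).intervalIntegrable _ _)
    ((by fun_prop : Continuous _).intervalIntegrable _ _), intervalIntegral.integral_const_mul,
    integral_id, integral_pow]
  ring

lemma integral_eq_Iic_add_Ioc_add_Ioi {f : ℝ → ℝ} (hf : Integrable f) {x : ℝ} (hx : 0 ≤ x) :
    ∫ y, f y = (∫ y in Iic 0, f y) + (∫ y in Ioc 0 x, f y) + ∫ y in Ioi x, f y := by
  rw [← intervalIntegral.integral_Iic_add_Ioi hf.integrableOn hf.integrableOn, add_assoc,
    ← setIntegral_union (Ioc_disjoint_Ioi le_rfl) measurableSet_Ioi hf.integrableOn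
      hf.integrableOn, Ioc_union_Ioi_eq_Ioi hx]

lemma setIntegral_Ioi_comp_sub_mul (f : ℝ → ℝ) (x : ℝ) :
    ∫ y in Ioi x, f (x - y) * f y = ∫ y in Iic 0, f (x - y) * f y := by
  rw [← (Measure.measurePreserving_sub_left volume x).setIntegral_preimage_emb
    (measurableEmbedding_subLeft x), integral_Iic_eq_integral_Iio]
  congr 1
  · ext y; simp
  · ext y; simp [mul_comm]

section

variable {C₀ : ℝ} {K : ℝ → ℝ}

lemma HasRightAsymptotics.abs_le (h : HasRightAsymptotics C₀ K) {t : ℝ} (ht : 0 ≤ t) :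
    |K t| ≤ (4 * t + C₀) * exp (-(5 * t) / 2) := by
  have hmain : |4 * t * exp (-(5 * t) / 2)| = 4 * t * exp (-(5 * t) / 2) :=
    abs_of_nonneg (by positivity)
  linarith [abs_sub_abs_le_abs_sub (K t) (4 * t * exp (-(5 * t) / 2)), h t ht]

lemma abs_le_mul_exp_neg_abs_half (hC₀ : 0 ≤ C₀) (hR : HasRightAsymptotics C₀ K)
    (hL : HasLeftDecay C₀ K) (t : ℝ) : |K t| ≤ 2 * (4 + C₀) * exp (-|t| / 2) := by
  rcases le_total 0 t with ht | ht
  · have hlin : 4 * t + C₀ ≤ (4 + C₀) * (1 + t) := by nlinarith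
    calc |K t| ≤ (4 * t + C₀) * exp (-(5 * t) / 2) := hR.abs_le ht
      _ ≤ (4 + C₀) * (2 * exp (t / 2)) * exp (-(5 * t) / 2) := by
        gcongr
        exact hlin.trans (by gcongr; exact one_add_le_two_mul_exp_half t)
      _ = 2 * (4 + C₀) * exp (-(2 * t)) := by
        rw [show -(2 * t) = t / 2 + -(5 * t) / 2 by ring, exp_add]; ring
      _ ≤ 2 * (4 + C₀) * exp (-|t| / 2) := by
        rw [abs_of_nonneg ht]; gcongr; linarith
  · calc |K t| ≤ C₀ * (1 + -t) * exp t := by simpa [abs_of_nonpos ht] using hL t ht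
      _ ≤ C₀ * (2 * exp (-t / 2)) * exp t := by
        gcongr; exact one_add_le_two_mul_exp_half (-t)
      _ = 2 * C₀ * exp (-|t| / 2) := by
        rw [abs_of_nonpos ht, show - -t / 2 = -t / 2 + t by ring, exp_add]; ring
      _ ≤ 2 * (4 + C₀) * exp (-|t| / 2) := by gcongr; linarith

lemma integrable_of_asymptotics (hC₀ : 0 ≤ C₀) (hK : Measurable K)
    (hR : HasRightAsymptotics C₀ K) (hL : HasLeftDecay C₀ K) : Integrable K :=
  ((integrable_exp_neg_mul_abs one_half_pos).const_mul (2 * (4 + C₀))).mono'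
    hK.aestronglyMeasurable (Filter.Eventually.of_forall fun t => by
      simpa [div_eq_inv_mul] using abs_le_mul_exp_neg_abs_half hC₀ hR hL t)

lemma integrable_comp_sub_mul (hC₀ : 0 ≤ C₀) (hK : Measurable K)
    (hR : HasRightAsymptotics C₀ K) (hL : HasLeftDecay C₀ K) (x : ℝ) :
    Integrable fun y => K (x - y) * K y :=
  (integrable_of_asymptotics hC₀ hK hR hL).bdd_mul (c := 2 * (4 + C₀))
    (hK.comp (measurable_const.sub measurable_id)).aestronglyMeasurable
    (Filter.Eventually.of_forall fun y =>
      (abs_le_mul_exp_neg_abs_half hC₀ hR hL (x - y)).trans <|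
        mul_le_of_le_one_right (by positivity) <| exp_le_one_iff.2 <| by
          linarith [abs_nonneg (x - y)])

lemma abs_mul_le_of_nonpos (hC₀ : 0 ≤ C₀) (hR : HasRightAsymptotics C₀ K)
    (hL : HasLeftDecay C₀ K) {x y : ℝ} (hx : 0 ≤ x) (hy : y ≤ 0) :
    |K (x - y) * K y| ≤ 4 * C₀ * (4 + C₀) * (1 + x) * exp (-(5 * x) / 2) * exp y := by
  have hKxy : |K (x - y)| ≤ (4 + C₀) * (1 + x) * (1 + -y) * exp (-(5 * (x - y)) / 2) := by
    have hlin : 4 * (x - y) + C₀ ≤ (4 + C₀) * (1 + x) * (1 + -y) := by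
      have hxy : 0 ≤ x * -y := mul_nonneg hx (neg_nonneg.2 hy)
      nlinarith [mul_nonneg hC₀ hxy, mul_nonneg hC₀ (sub_nonneg.2 (hy.trans hx))]
    exact (hR.abs_le (by linarith)).trans (by gcongr)
  have hKy : |K y| ≤ C₀ * (1 + -y) * exp y := by simpa [abs_of_nonpos hy] using hL y hy
  calc |K (x - y) * K y|
      ≤ (4 + C₀) * (1 + x) * (1 + -y) * exp (-(5 * (x - y)) / 2) * (C₀ * (1 + -y) * exp y) := by
        rw [abs_mul]; exact mul_le_mul hKxy hKy (abs_nonneg _) ((abs_nonneg _).trans hKxy)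
    _ = C₀ * (4 + C₀) * (1 + x) * (1 + -y) ^ 2 * exp (-(5 * (x - y)) / 2) * exp y := by ring
    _ ≤ C₀ * (4 + C₀) * (1 + x) * (4 * exp (-y)) * exp (-(5 * (x - y)) / 2) * exp y := by
        gcongr; exact one_add_sq_le_four_mul_exp (by linarith)
    _ = 4 * C₀ * (4 + C₀) * (1 + x) * exp (-(5 * x) / 2) * exp (5 * y / 2) := by
        rw [show -(5 * (x - y)) / 2 = -(5 * x) / 2 + 5 * y / 2 by ring, exp_add, exp_neg]
        field_simp
    _ ≤ 4 * C₀ * (4 + C₀) * (1 + x) * exp (-(5 * x) / 2) * exp y := by gcongr; linarith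

lemma abs_setIntegral_Iic_le (hC₀ : 0 ≤ C₀) (hR : HasRightAsymptotics C₀ K)
    (hL : HasLeftDecay C₀ K) {x : ℝ} (hx : 0 ≤ x) :
    |∫ y in Iic 0, K (x - y) * K y| ≤ 4 * C₀ * (4 + C₀) * (1 + x) * exp (-(5 * x) / 2) := by
  calc |∫ y in Iic 0, K (x - y) * K y|
      ≤ ∫ y in Iic 0, 4 * C₀ * (4 + C₀) * (1 + x) * exp (-(5 * x) / 2) * exp y := by
        rw [← norm_eq_abs]
        exact norm_integral_le_of_norm_le ((integrableOn_exp_Iic 0).const_mul _) <|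
          (ae_restrict_iff' measurableSet_Iic).2 <| Filter.Eventually.of_forall fun y hy =>
            abs_mul_le_of_nonpos hC₀ hR hL hx hy
    _ = 4 * C₀ * (4 + C₀) * (1 + x) * exp (-(5 * x) / 2) := by
        rw [integral_const_mul, integral_exp_Iic_zero, mul_one]

lemma abs_mul_sub_le_of_mem_Icc (hR : HasRightAsymptotics C₀ K) {x y : ℝ} (hy : y ∈ Icc 0 x) :
    |K (x - y) * K y - 16 * (x - y) * y * exp (-(5 * x) / 2)| ≤
      C₀ * (4 * x + C₀) * exp (-(5 * x) / 2) := by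
  obtain ⟨hy0, hyx⟩ := hy
  set a := exp (-(5 * (x - y)) / 2)
  set b := exp (-(5 * y) / 2)
  have hab : a * b = exp (-(5 * x) / 2) := by rw [← exp_add]; ring_nf
  have h₁ := hR (x - y) (sub_nonneg.2 hyx)
  have h₂ := hR y hy0
  have hKy := hR.abs_le hy0
  have hsplit : K (x - y) * K y - 16 * (x - y) * y * exp (-(5 * x) / 2) =
      (K (x - y) - 4 * (x - y) * a) * K y + 4 * (x - y) * a * (K y - 4 * y * b) := by
    rw [← hab]; ring
  have hpa : 0 ≤ 4 * (x - y) * a := by have := sub_nonneg.2 hyx; positivity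
  calc _ ≤ |K (x - y) - 4 * (x - y) * a| * |K y| + 4 * (x - y) * a * |K y - 4 * y * b| := by
        rw [hsplit, ← abs_mul, ← abs_of_nonneg hpa, ← abs_mul, abs_of_nonneg hpa]
        exact abs_add_le _ _
    _ ≤ C₀ * a * ((4 * y + C₀) * b) + 4 * (x - y) * a * (C₀ * b) := by
        gcongr
        · exact (abs_nonneg _).trans h₁
    _ = C₀ * (4 * x + C₀) * exp (-(5 * x) / 2) := by rw [← hab]; ring

lemma abs_setIntegral_Ioc_sub_le (hR : HasRightAsymptotics C₀ K) {x : ℝ} (hx : 0 ≤ x)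
    (hf : IntegrableOn (fun y => K (x - y) * K y) (Ioc 0 x)) :
    |(∫ y in Ioc 0 x, K (x - y) * K y) - 8 / 3 * x ^ 3 * exp (-(5 * x) / 2)| ≤
      C₀ * (4 * x + C₀) * x * exp (-(5 * x) / 2) := by
  have hmain : ∫ y in Ioc 0 x, 16 * (x - y) * y * exp (-(5 * x) / 2) =
      8 / 3 * x ^ 3 * exp (-(5 * x) / 2) := by
    simp_rw [show ∀ y, 16 * (x - y) * y * exp (-(5 * x) / 2) =
      (x - y) * y * (16 * exp (-(5 * x) / 2)) from fun y => by ring]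
    rw [integral_mul_const, integral_Ioc_sub_mul_self hx]
    ring
  have hmainInt : IntegrableOn (fun y => 16 * (x - y) * y * exp (-(5 * x) / 2)) (Ioc 0 x) :=
    Continuous.integrableOn_Ioc (by fun_prop)
  rw [← hmain, ← integral_sub hf hmainInt, ← norm_eq_abs]
  calc _ ≤ C₀ * (4 * x + C₀) * exp (-(5 * x) / 2) * volume.real (Ioc 0 x) :=
        norm_setIntegral_le_of_norm_le_const measure_Ioc_lt_top fun y hy =>
          abs_mul_sub_le_of_mem_Icc hR (Ioc_subset_Icc_self hy)
    _ = _ := by rw [Real.volume_real_Ioc_of_le hx, sub_zero]; ring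

lemma abs_integral_comp_sub_mul_sub_le (hC₀ : 0 ≤ C₀) (hK : Measurable K)
    (hR : HasRightAsymptotics C₀ K) (hL : HasLeftDecay C₀ K) {x : ℝ} (hx : 1 ≤ x) :
    |(∫ y, K (x - y) * K y) - 8 / 3 * x ^ 3 * exp (-(5 * x) / 2)| ≤
      17 * C₀ * (4 + C₀) * x ^ 2 * exp (-(5 * x) / 2) := by
  have hx0 : 0 ≤ x := zero_le_one.trans hx
  have hf := integrable_comp_sub_mul hC₀ hK hR hL x
  have htail := abs_setIntegral_Iic_le hC₀ hR hL hx0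
  have hmid := abs_setIntegral_Ioc_sub_le hR hx0 hf.integrableOn
  rw [integral_eq_Iic_add_Ioc_add_Ioi hf hx0, setIntegral_Ioi_comp_sub_mul]
  set E := exp (-(5 * x) / 2)
  have hc : 0 ≤ C₀ * (4 + C₀) * E := by positivity
  calc _ = |(∫ y in Iic 0, K (x - y) * K y) +
          ((∫ y in Ioc 0 x, K (x - y) * K y) - 8 / 3 * x ^ 3 * E) +
          ∫ y in Iic 0, K (x - y) * K y| := by congr 1; ring
    _ ≤ 4 * C₀ * (4 + C₀) * (1 + x) * E + C₀ * (4 * x + C₀) * x * E +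
          4 * C₀ * (4 + C₀) * (1 + x) * E :=
        (abs_add_three _ _ _).trans (add_le_add_three htail hmid htail)
    _ ≤ 17 * C₀ * (4 + C₀) * x ^ 2 * E := by
        have hx1 : 0 ≤ x - 1 := sub_nonneg.2 hx
        nlinarith [mul_nonneg hc (mul_nonneg hx1 (by linarith : (0:ℝ) ≤ 2 * x + 1)),
          mul_nonneg (mul_nonneg hC₀ hx0) (mul_nonneg hx1 (exp_pos (-(5 * x) / 2)).le)]

end

theorem stmt7 (C₀ : ℝ) (hC₀ : 0 < C₀) (K : ℝ → ℝ) (hK : Measurable K)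
    (hpos : ∀ x : ℝ, 0 ≤ x →
      |K x - 4 * x * Real.exp (-(5 * x) / 2)| ≤ C₀ * Real.exp (-(5 * x) / 2))
    (hneg : ∀ x : ℝ, x ≤ 0 → |K x| ≤ C₀ * (1 + |x|) * Real.exp x) :
    (∀ x : ℝ, Integrable (fun y => K (x - y) * K y)) ∧
    ∃ C : ℝ, 0 < C ∧ ∃ x₀ : ℝ, 0 < x₀ ∧ ∀ x : ℝ, x₀ ≤ x →
      |(∫ y, K (x - y) * K y) - 8 / 3 * x ^ 3 * Real.exp (-(5 * x) / 2)| ≤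
        C * x ^ 2 * Real.exp (-(5 * x) / 2) :=
  ⟨integrable_comp_sub_mul hC₀.le hK hpos hneg, 17 * C₀ * (4 + C₀), by positivity, 1, one_pos,
    fun _ hx => abs_integral_comp_sub_mul_sub_le hC₀.le hK hpos hneg hx⟩
end

section
/- Let M > 0 and let h : ℝ → ℝ be measurable with |h(x)| ≤ M e^{x} (1+|x|³) for x < 0 and |h(x)| ≤ M e^{−5x/2} (1+|x|³) for x ≥ 0. Let θ ∈ (−1, 5/2) and p ∈ [1,∞). Then there exists a constant C = C(θ,p) > 0, independent of h, M and f, such that for every measurable f with ∫_ℝ |f(x)|^p e^{θx} dx < ∞, the convolution h∗f is defined almost everywhere and (∫_ℝ |(h∗f)(x)|^p e^{θx} dx)^{1/p} ≤ C M (∫_ℝ |f(x)|^p e^{θx} dx)^{1/p}. -/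
/-!
Put `q = θ / p`, so that `-1 < q < 5/2`. Since `e^{qx} = e^{q(x-y)} e^{qy}`, the weight can be moved
onto both factors: `e^{qx} |(h ∗ f)(x)| ≤ (k ∗ φ)(x)` with `k = e^{q·} |h|` and `φ = e^{q·} |f|`,
and the weighted `L^p` norm of `f` is the `L^p` norm of `φ`. The bounds on `h` give
`k(z) ≤ M (1 + |z|³) e^{-δ|z|}` with `δ = min (1 + q) (5/2 - q) > 0`, so `‖k‖₁ ≤ C M`. Young's
inequality `‖k ∗ φ‖_p ≤ ‖k‖₁ ‖φ‖_p`, proved for `ℝ≥0∞`-valued functions from Hölder's inequality,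
concludes; finiteness of `‖k ∗ φ‖_p` also makes `y ↦ h (x - y) * f y` integrable for a.e. `x`.
-/

open MeasureTheory
open scoped ENNReal

theorem rpow_lintegral_mul_le {α : Type*} [MeasurableSpace α] {μ : Measure α} {k φ : α → ℝ≥0∞}
    (hk : AEMeasurable k μ) (hφ : AEMeasurable φ μ) {p : ℝ} (hp : 1 ≤ p) :
    (∫⁻ x, k x * φ x ∂μ) ^ p ≤ (∫⁻ x, k x ∂μ) ^ (p - 1) * ∫⁻ x, k x * φ x ^ p ∂μ := by
  have hp0 : 0 < p := by linarith
  have hconj : 0 ≤ 1 - 1 / p := sub_nonneg.2 ((div_le_one hp0).2 hp)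
  have hHolder : ∫⁻ x, k x * φ x ∂μ ≤
      (∫⁻ x, k x ∂μ) ^ (1 - 1 / p) * (∫⁻ x, k x * φ x ^ p ∂μ) ^ (1 / p) :=
    calc ∫⁻ x, k x * φ x ∂μ = ∫⁻ x, k x ^ (1 - 1 / p) * (k x * φ x ^ p) ^ (1 / p) ∂μ := by
          refine lintegral_congr fun x => ?_
          rw [ENNReal.mul_rpow_of_nonneg _ _ (by positivity), ← ENNReal.rpow_mul,
            mul_one_div_cancel hp0.ne', ENNReal.rpow_one, ← mul_assoc,
            ← ENNReal.rpow_add_of_nonneg _ _ hconj (by positivity), sub_add_cancel, ENNReal.rpow_one]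
      _ ≤ _ := ENNReal.lintegral_mul_norm_pow_le hk (hk.mul (hφ.pow_const p)) hconj (by positivity)
          (sub_add_cancel 1 (1 / p))
  calc (∫⁻ x, k x * φ x ∂μ) ^ p
      ≤ ((∫⁻ x, k x ∂μ) ^ (1 - 1 / p) * (∫⁻ x, k x * φ x ^ p ∂μ) ^ (1 / p)) ^ p := by
        gcongr
    _ = (∫⁻ x, k x ∂μ) ^ (p - 1) * ∫⁻ x, k x * φ x ^ p ∂μ := by
        rw [ENNReal.mul_rpow_of_nonneg _ _ hp0.le, ← ENNReal.rpow_mul, ← ENNReal.rpow_mul,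
          sub_mul, one_mul, one_div_mul_cancel hp0.ne', ENNReal.rpow_one]

theorem ae_ne_top_of_rpow_lintegral_rpow_ne_top {α : Type*} [MeasurableSpace α] {μ : Measure α}
    {g : α → ℝ≥0∞} (hg : AEMeasurable g μ) {p : ℝ} (hp : 0 < p)
    (hfin : (∫⁻ x, g x ^ p ∂μ) ^ (1 / p) ≠ ⊤) : ∀ᵐ x ∂μ, g x ≠ ⊤ := by
  have hint : ∫⁻ x, g x ^ p ∂μ ≠ ⊤ := fun htop =>
    hfin (by rw [htop, ENNReal.top_rpow_of_pos (by positivity)])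
  filter_upwards [ae_lt_top' (hg.pow_const p) hint] with x hx
  exact (ENNReal.rpow_eq_top_iff_of_pos hp).not.1 hx.ne

section Young

variable {G : Type*} [AddGroup G] [MeasurableSpace G] [MeasurableAdd₂ G] [MeasurableNeg G]
  {μ : Measure G} [SFinite μ] [μ.IsAddLeftInvariant]

theorem lintegral_lconvolution {k φ : G → ℝ≥0∞} (hk : Measurable k) (hφ : Measurable φ) :
    ∫⁻ x, (k ⋆ₗ[μ] φ) x ∂μ = (∫⁻ x, k x ∂μ) * ∫⁻ x, φ x ∂μ := by
  have hinner : ∀ y, ∫⁻ x, k y * φ (-y + x) ∂μ = k y * ∫⁻ x, φ x ∂μ := fun y => by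
    rw [lintegral_const_mul _ (by fun_prop), lintegral_add_left_eq_self φ]
  simp only [lconvolution_def]
  rw [lintegral_lintegral_swap (by fun_prop)]
  simp_rw [hinner]
  rw [lintegral_mul_const _ hk]

theorem lintegral_lconvolution_rpow_le {k φ : G → ℝ≥0∞} (hk : Measurable k) (hφ : Measurable φ)
    {p : ℝ} (hp : 1 ≤ p) :
    ∫⁻ x, (k ⋆ₗ[μ] φ) x ^ p ∂μ ≤ (∫⁻ x, k x ∂μ) ^ p * ∫⁻ x, φ x ^ p ∂μ := by
  set A := ∫⁻ x, k x ∂μ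
  calc ∫⁻ x, (k ⋆ₗ[μ] φ) x ^ p ∂μ ≤ ∫⁻ x, A ^ (p - 1) * (k ⋆ₗ[μ] fun y => φ y ^ p) x ∂μ :=
        lintegral_mono fun x => rpow_lintegral_mul_le hk.aemeasurable (by fun_prop) hp
    _ = A ^ (p - 1) * (A * ∫⁻ x, φ x ^ p ∂μ) := by
        rw [lintegral_const_mul _ (measurable_lconvolution μ hk (hφ.pow_const p)),
          lintegral_lconvolution hk (hφ.pow_const p)]
    _ = A ^ p * ∫⁻ x, φ x ^ p ∂μ := by
        have hpow : A ^ (p - 1) * A = A ^ p := by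
          simpa using (ENNReal.rpow_add_of_nonneg (x := A) (p - 1) 1 (by linarith) zero_le_one).symm
        rw [← mul_assoc, hpow]

theorem rpow_lintegral_lconvolution_rpow_le {k φ : G → ℝ≥0∞} (hk : Measurable k)
    (hφ : Measurable φ) {p : ℝ} (hp : 1 ≤ p) :
    (∫⁻ x, (k ⋆ₗ[μ] φ) x ^ p ∂μ) ^ (1 / p) ≤ (∫⁻ x, k x ∂μ) * (∫⁻ x, φ x ^ p ∂μ) ^ (1 / p) := by
  have hp0 : 0 < p := by linarith
  calc (∫⁻ x, (k ⋆ₗ[μ] φ) x ^ p ∂μ) ^ (1 / p)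
      ≤ ((∫⁻ x, k x ∂μ) ^ p * ∫⁻ x, φ x ^ p ∂μ) ^ (1 / p) := by
        gcongr; exact lintegral_lconvolution_rpow_le hk hφ hp
    _ = (∫⁻ x, k x ∂μ) * (∫⁻ x, φ x ^ p ∂μ) ^ (1 / p) := by
        rw [ENNReal.mul_rpow_of_nonneg _ _ (by positivity), ← ENNReal.rpow_mul,
          mul_one_div_cancel hp0.ne', ENNReal.rpow_one]

open Real Set
open scoped Nat

theorem one_add_pow_mul_exp_neg_le {t δ : ℝ} (ht : 0 ≤ t) (hδ : 0 < δ) (n : ℕ) :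
    (1 + t ^ n) * exp (-δ * t) ≤ (1 + n ! * (2 / δ) ^ n) * exp (-(δ / 2) * t) := by
  have hsplit : exp (-δ * t) = exp (-(δ / 2) * t) * exp (-(δ / 2) * t) := by
    rw [← exp_add]; ring_nf
  have hpow : t ^ n * exp (-(δ / 2) * t) ≤ n ! * (2 / δ) ^ n := by
    have h := pow_div_factorial_le_exp (δ / 2 * t) (by positivity) n
    rw [div_le_iff₀ (by positivity), mul_pow] at h
    rw [neg_mul, exp_neg, ← div_eq_mul_inv, div_le_iff₀ (exp_pos _)]
    calc t ^ n = (2 / δ) ^ n * ((δ / 2) ^ n * t ^ n) := by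
          rw [← mul_assoc, ← mul_pow, div_mul_div_cancel₀ hδ.ne', div_self two_ne_zero, one_pow, one_mul]
      _ ≤ (2 / δ) ^ n * (exp (δ / 2 * t) * n !) := by gcongr
      _ = n ! * (2 / δ) ^ n * exp (δ / 2 * t) := by ring
  have hexp : exp (-(δ / 2) * t) ≤ 1 := exp_le_one_iff.2 (by nlinarith)
  rw [hsplit]
  nlinarith [exp_pos (-(δ / 2) * t), pow_nonneg ht n]

theorem lintegral_exp_neg_mul_abs {ε : ℝ} (hε : 0 < ε) :
    ∫⁻ z, ENNReal.ofReal (exp (-ε * |z|)) = ENNReal.ofReal (2 / ε) := by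
  have hIic : ∫⁻ z in Iic 0, ENNReal.ofReal (exp (-ε * |z|)) = ENNReal.ofReal (1 / ε) := by
    rw [setLIntegral_congr_fun measurableSet_Iic fun z (hz : z ≤ 0) => by
        rw [abs_of_nonpos hz, neg_mul_neg],
      ← ofReal_integral_eq_lintegral_ofReal (integrableOn_exp_mul_Iic hε 0)
        (ae_of_all _ fun _ => (exp_pos _).le), integral_exp_mul_Iic hε, mul_zero, exp_zero]
  have hIoi : ∫⁻ z in Ioi 0, ENNReal.ofReal (exp (-ε * |z|)) = ENNReal.ofReal (1 / ε) := by
    rw [setLIntegral_congr_fun measurableSet_Ioi fun z (hz : 0 < z) => by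
        rw [abs_of_pos hz],
      ← ofReal_integral_eq_lintegral_ofReal (integrableOn_exp_mul_Ioi (neg_lt_zero.2 hε) 0)
        (ae_of_all _ fun _ => (exp_pos _).le), integral_exp_mul_Ioi (neg_lt_zero.2 hε),
      mul_zero, exp_zero, neg_div_neg_eq]
  rw [← setLIntegral_univ, ← Iic_union_Ioi (a := (0 : ℝ)),
    lintegral_union measurableSet_Ioi (Iic_disjoint_Ioi le_rfl), hIic, hIoi,
    ← ENNReal.ofReal_add (by positivity) (by positivity)]
  ring_nf

noncomputable def expWeighted (q : ℝ) (g : ℝ → ℝ) (x : ℝ) : ℝ≥0∞ :=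
  ENNReal.ofReal (exp (q * x)) * ‖g x‖ₑ

namespace expWeighted

variable {q : ℝ} {g h f : ℝ → ℝ}

theorem eq_ofReal (q : ℝ) (g : ℝ → ℝ) (x : ℝ) :
    expWeighted q g x = ENNReal.ofReal (|g x| * exp (q * x)) := by
  rw [expWeighted, enorm_eq_ofReal_abs, ← ENNReal.ofReal_mul (exp_pos _).le, mul_comm]

theorem measurable (hg : Measurable g) : Measurable (expWeighted q g) := by
  unfold expWeighted; fun_prop

theorem rpow_eq {p : ℝ} (hp : 0 < p) (q : ℝ) (g : ℝ → ℝ) (x : ℝ) :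
    expWeighted q g x ^ p = ENNReal.ofReal (|g x| ^ p * exp (q * p * x)) := by
  rw [eq_ofReal, ENNReal.ofReal_rpow_of_nonneg (by positivity) hp.le,
    mul_rpow (abs_nonneg _) (exp_pos _).le, ← exp_mul]
  ring_nf

theorem lconvolution_apply (q : ℝ) (h f : ℝ → ℝ) (x : ℝ) :
    (expWeighted q h ⋆ₗ expWeighted q f) x =
      ENNReal.ofReal (exp (q * x)) * ∫⁻ y, ‖h (x - y) * f y‖ₑ := by
  rw [lconvolution_comm, lconvolution_def, ← lintegral_const_mul' _ _ ENNReal.ofReal_ne_top]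
  refine lintegral_congr fun y => ?_
  rw [expWeighted, expWeighted, neg_add_eq_sub, enorm_mul,
    show q * x = q * y + q * (x - y) by ring, exp_add, ENNReal.ofReal_mul (exp_pos _).le]
  ring

theorem integral_le_lconvolution (q : ℝ) (h f : ℝ → ℝ) (x : ℝ) :
    expWeighted q (fun x => ∫ y, h (x - y) * f y) x ≤ (expWeighted q h ⋆ₗ expWeighted q f) x := by
  rw [lconvolution_apply]
  exact mul_le_mul_right (enorm_integral_le_lintegral_enorm _) _

theorem integrable_of_lconvolution_ne_top (hh : Measurable h) (hf : Measurable f) {x : ℝ}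
    (hx : (expWeighted q h ⋆ₗ expWeighted q f) x ≠ ⊤) :
    Integrable fun y => h (x - y) * f y := by
  rw [lconvolution_apply] at hx
  refine ⟨by fun_prop, lt_top_iff_ne_top.2 fun htop => hx ?_⟩
  rw [htop, ENNReal.mul_top (by simp [exp_pos])]

end expWeighted

theorem abs_mul_exp_le_of_bound {M q δ : ℝ} {h : ℝ → ℝ}
    (hb1 : ∀ x : ℝ, x < 0 → |h x| ≤ M * exp x * (1 + |x| ^ 3))
    (hb2 : ∀ x : ℝ, 0 ≤ x → |h x| ≤ M * exp (-(5 * x) / 2) * (1 + |x| ^ 3))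
    (hδ1 : δ ≤ 1 + q) (hδ2 : δ ≤ 5 / 2 - q) (z : ℝ) :
    |h z| * exp (q * z) ≤ M * ((1 + |z| ^ 3) * exp (-δ * |z|)) := by
  have hM : 0 ≤ M := by simpa using (abs_nonneg _).trans (hb2 0 le_rfl)
  rcases lt_or_ge z 0 with hz | hz
  · have hexp : exp ((1 + q) * z) ≤ exp (-δ * |z|) :=
      exp_le_exp.2 (by rw [abs_of_neg hz]; nlinarith)
    calc |h z| * exp (q * z) ≤ M * exp z * (1 + |z| ^ 3) * exp (q * z) := by
          gcongr; exact hb1 z hz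
      _ = M * ((1 + |z| ^ 3) * exp ((1 + q) * z)) := by
          rw [show (1 + q) * z = z + q * z by ring, exp_add]; ring
      _ ≤ M * ((1 + |z| ^ 3) * exp (-δ * |z|)) :=
          mul_le_mul_of_nonneg_left (mul_le_mul_of_nonneg_left hexp (by positivity)) hM
  · have hexp : exp (-(5 / 2 - q) * z) ≤ exp (-δ * |z|) :=
      exp_le_exp.2 (by rw [abs_of_nonneg hz]; nlinarith)
    calc |h z| * exp (q * z) ≤ M * exp (-(5 * z) / 2) * (1 + |z| ^ 3) * exp (q * z) := by
          gcongr; exact hb2 z hz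
      _ = M * ((1 + |z| ^ 3) * exp (-(5 / 2 - q) * z)) := by
          rw [show -(5 / 2 - q) * z = -(5 * z) / 2 + q * z by ring, exp_add]; ring
      _ ≤ M * ((1 + |z| ^ 3) * exp (-δ * |z|)) :=
          mul_le_mul_of_nonneg_left (mul_le_mul_of_nonneg_left hexp (by positivity)) hM

theorem lintegral_expWeighted_le {M q δ : ℝ} {h : ℝ → ℝ}
    (hb1 : ∀ x : ℝ, x < 0 → |h x| ≤ M * exp x * (1 + |x| ^ 3))
    (hb2 : ∀ x : ℝ, 0 ≤ x → |h x| ≤ M * exp (-(5 * x) / 2) * (1 + |x| ^ 3))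
    (hδ : 0 < δ) (hδ1 : δ ≤ 1 + q) (hδ2 : δ ≤ 5 / 2 - q) :
    ∫⁻ z, expWeighted q h z ≤ ENNReal.ofReal ((1 + 3 ! * (2 / δ) ^ 3) * (4 / δ) * M) := by
  have hM : 0 ≤ M := by simpa using (abs_nonneg _).trans (hb2 0 le_rfl)
  set c := 1 + 3 ! * (2 / δ) ^ 3
  calc ∫⁻ z, expWeighted q h z
      ≤ ∫⁻ z, ENNReal.ofReal (M * c) * ENNReal.ofReal (exp (-(δ / 2) * |z|)) := by
        refine lintegral_mono fun z => ?_
        rw [expWeighted.eq_ofReal, ← ENNReal.ofReal_mul (by positivity)]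
        refine ENNReal.ofReal_le_ofReal ?_
        calc |h z| * exp (q * z) ≤ M * ((1 + |z| ^ 3) * exp (-δ * |z|)) :=
              abs_mul_exp_le_of_bound hb1 hb2 hδ1 hδ2 z
          _ ≤ M * (c * exp (-(δ / 2) * |z|)) :=
              mul_le_mul_of_nonneg_left (one_add_pow_mul_exp_neg_le (abs_nonneg z) hδ 3) hM
          _ = M * c * exp (-(δ / 2) * |z|) := by ring
    _ = ENNReal.ofReal (c * (4 / δ) * M) := by
        rw [lintegral_const_mul' _ _ ENNReal.ofReal_ne_top, lintegral_exp_neg_mul_abs (half_pos hδ),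
          ← ENNReal.ofReal_mul (by positivity)]
        congr 1
        field_simp
        ring

theorem stmt15 (θ p : ℝ) (hθ1 : -1 < θ) (hθ2 : θ < 5/2) (hp : 1 ≤ p) :
    ∃ C : ℝ, 0 < C ∧ ∀ M : ℝ, 0 < M → ∀ h : ℝ → ℝ, Measurable h →
      (∀ x : ℝ, x < 0 → |h x| ≤ M * Real.exp x * (1 + |x| ^ 3)) →
      (∀ x : ℝ, 0 ≤ x → |h x| ≤ M * Real.exp (-(5 * x) / 2) * (1 + |x| ^ 3)) →
      ∀ f : ℝ → ℝ, Measurable f →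
        (∫⁻ x : ℝ, ENNReal.ofReal (|f x| ^ p * Real.exp (θ * x))) < ⊤ →
        -- the convolution `h ∗ f` is defined almost everywhere
        (∀ᵐ x : ℝ, Integrable (fun y => h (x - y) * f y)) ∧
        -- the weighted `L^p` bound
        (∫⁻ x : ℝ, ENNReal.ofReal
              (|∫ y, h (x - y) * f y| ^ p * Real.exp (θ * x))) ^ (1 / p) ≤
          ENNReal.ofReal (C * M) *
            (∫⁻ x : ℝ, ENNReal.ofReal (|f x| ^ p * Real.exp (θ * x))) ^ (1 / p) := by
  have hp0 : 0 < p := by linarith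
  obtain ⟨q, hqp⟩ : ∃ q, q * p = θ := ⟨θ / p, div_mul_cancel₀ θ hp0.ne'⟩
  set δ := min (1 + q) (5 / 2 - q)
  have hδ : 0 < δ := lt_min (by nlinarith) (by nlinarith)
  refine ⟨(1 + 3 ! * (2 / δ) ^ 3) * (4 / δ), by positivity,
    fun M hM h hh hb1 hb2 f hf hfin => ?_⟩
  set K := expWeighted q h
  set F := expWeighted q f
  have hK := lintegral_expWeighted_le (q := q) hb1 hb2 hδ (min_le_left _ _) (min_le_right _ _)
  have hF : ∫⁻ x, F x ^ p = ∫⁻ x, ENNReal.ofReal (|f x| ^ p * exp (θ * x)) := by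
    simp_rw [F, expWeighted.rpow_eq hp0, hqp]
  have hKm : Measurable K := expWeighted.measurable hh
  have hFm : Measurable F := expWeighted.measurable hf
  have hYoung := rpow_lintegral_lconvolution_rpow_le (μ := volume) hKm hFm hp
  have hconv : ∀ᵐ x, (K ⋆ₗ F) x ≠ ⊤ :=
    ae_ne_top_of_rpow_lintegral_rpow_ne_top (by fun_prop) hp0 (ne_top_of_le_ne_top
      (ENNReal.mul_ne_top (ne_top_of_le_ne_top ENNReal.ofReal_ne_top hK)
        (ENNReal.rpow_ne_top_of_nonneg (by positivity) (hF ▸ hfin.ne))) hYoung)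
  refine ⟨hconv.mono fun x hx => expWeighted.integrable_of_lconvolution_ne_top hh hf hx, ?_⟩
  calc (∫⁻ x, ENNReal.ofReal (|∫ y, h (x - y) * f y| ^ p * exp (θ * x))) ^ (1 / p)
      = (∫⁻ x, expWeighted q (fun x => ∫ y, h (x - y) * f y) x ^ p) ^ (1 / p) := by
        simp_rw [expWeighted.rpow_eq hp0, hqp]
    _ ≤ (∫⁻ x, (K ⋆ₗ F) x ^ p) ^ (1 / p) := by
        gcongr with x
        exact expWeighted.integral_le_lconvolution q h f x
    _ ≤ (∫⁻ x, K x) * (∫⁻ x, F x ^ p) ^ (1 / p) := hYoung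
    _ ≤ _ := by
        rw [hF]
        gcongr
end Young
end

section
/- Let ℓ > 0 and let h : ℝ → ℝ be measurable with |h(x)| ≤ ℓ e^{x} (1+|x|³) for x < 0 and |h(x)| ≤ ℓ e^{−5x/2} (1+|x|³) for x ≥ 0. Let −5/2 < A < 1 and −5/2 < B < 1, let N > 0, and let f₀ be measurable with |f₀(x)| ≤ N e^{Ax} for x < 0 and |f₀(x)| ≤ N e^{Bx} for x ≥ 0. Then the convolution (h∗f₀)(x) = ∫_ℝ h(x−y) f₀(y) dy is absolutely convergent for every x ∈ ℝ, and there exists C = C(A,B) > 0 such that |(h∗f₀)(x)| ≤ C ℓ N e^{Ax} for all x < 0 and |(h∗f₀)(x)| ≤ C ℓ N e^{Bx} for all x ≥ 0. -/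
/-!
Let `w_{p,q}(u) = e^{pu}` for `u < 0` and `e^{qu}` for `u ≥ 0`, the weight of `X_{p,q}`. Since
`log w_{A,B}` is piecewise linear with slopes `A` and `B`, we have
`w_{A,B}(y) ≤ w_{A,B}(x) (e^{A(y-x)} + e^{B(y-x)})`, so convolution with any kernel `κ` satisfying
`∫ |κ(u)| (e^{-Au} + e^{-Bu}) du < ∞` maps `X_{A,B}` boundedly into itself. The cubic factor in the
bound on `h` is absorbed by moving both of its exponents inwards by a small `δ`, and the resulting
kernel `w_{1-δ, -5/2+δ}` is admissible as soon as `-5/2 + δ < A, B < 1 - δ`.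
-/

open MeasureTheory Set Real

lemma one_add_pow_three_le_mul_exp {δ : ℝ} (hδ : 0 < δ) {t : ℝ} (ht : 0 ≤ t) :
    1 + t ^ 3 ≤ (1 + 6 / δ ^ 3) * exp (δ * t) := by
  have hcube : (δ * t) ^ 3 / 6 ≤ exp (δ * t) := by
    simpa [Nat.factorial] using pow_div_factorial_le_exp (δ * t) (by positivity) 3
  have hcube' : t ^ 3 ≤ 6 / δ ^ 3 * exp (δ * t) := by
    rw [div_mul_eq_mul_div, le_div_iff₀ (by positivity)]
    linarith [show t ^ 3 * δ ^ 3 = (δ * t) ^ 3 by ring]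
  linarith [one_le_exp (by positivity : 0 ≤ δ * t)]

noncomputable def expWeight (p q : ℝ) (u : ℝ) : ℝ :=
  if u < 0 then exp (p * u) else exp (q * u)

namespace expWeight

variable {p q : ℝ}

lemma of_neg {u : ℝ} (hu : u < 0) : expWeight p q u = exp (p * u) := if_pos hu

lemma of_nonneg {u : ℝ} (hu : 0 ≤ u) : expWeight p q u = exp (q * u) := if_neg hu.not_gt

lemma pos (u : ℝ) : 0 < expWeight p q u := by
  unfold expWeight; split <;> positivity

lemma mul_exp (r u : ℝ) : expWeight p q u * exp (r * u) = expWeight (p + r) (q + r) u := by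
  unfold expWeight; split <;> rw [← exp_add] <;> ring_nf

lemma mul_exp_abs (δ u : ℝ) : expWeight p q u * exp (δ * |u|) = expWeight (p - δ) (q + δ) u := by
  unfold expWeight
  split
  · rw [abs_of_neg ‹_›, ← exp_add]; ring_nf
  · rw [abs_of_nonneg (not_lt.mp ‹_›), ← exp_add]; ring_nf

lemma add_le (x u : ℝ) : expWeight p q (x + u) ≤ expWeight p q x * (exp (p * u) + exp (q * u)) := by
  have hexp : ∀ s t : ℝ, s ≤ t + max (p * u) (q * u) →
      exp s ≤ exp t * (exp (p * u) + exp (q * u)) := by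
    intro s t hst
    calc exp s ≤ exp t * exp (max (p * u) (q * u)) := by rw [← exp_add]; exact exp_le_exp.mpr hst
      _ ≤ exp t * (exp (p * u) + exp (q * u)) := by
        gcongr
        rcases max_cases (p * u) (q * u) with ⟨h, -⟩ | ⟨h, -⟩ <;> rw [h] <;>
          linarith [exp_pos (p * u), exp_pos (q * u)]
  unfold expWeight
  have h1 := le_max_left (p * u) (q * u)
  have h2 := le_max_right (p * u) (q * u)
  split_ifs with hxu hx hx <;> apply hexp <;> rcases le_total p q with hpq | hpq <;> nlinarith

lemma integrable (hq : q < 0) (hp : 0 < p) : Integrable (expWeight p q) := by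
  have hneg : IntegrableOn (expWeight p q) (Iio 0) :=
    ((integrableOn_exp_mul_Iic hp 0).mono_set Iio_subset_Iic_self).congr_fun
      (fun u hu => (of_neg hu).symm) measurableSet_Iio
  have hnonneg : IntegrableOn (expWeight p q) (Ici 0) :=
    (Iff.mpr integrableOn_Ici_iff_integrableOn_Ioi (integrableOn_exp_mul_Ioi hq 0)).congr_fun
      (fun u hu => (of_nonneg hu).symm) measurableSet_Ici
  rw [← integrableOn_univ, ← Iio_union_Ici (a := (0 : ℝ))]
  exact hneg.union hnonneg

variable {A B : ℝ}

lemma integrable_mul_exp_add_exp (hA : q < A ∧ A < p) (hB : q < B ∧ B < p) :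
    Integrable fun u => expWeight p q u * (exp (-A * u) + exp (-B * u)) := by
  simp only [mul_add, mul_exp]
  exact (integrable (by linarith) (by linarith)).add (integrable (by linarith) (by linarith))

lemma integral_mul_exp_add_exp_pos (hA : q < A ∧ A < p) (hB : q < B ∧ B < p) :
    0 < ∫ u, expWeight p q u * (exp (-A * u) + exp (-B * u)) := by
  have hpos : ∀ u, 0 < expWeight p q u * (exp (-A * u) + exp (-B * u)) :=
    fun u => mul_pos (pos u) (by positivity)
  rw [integral_pos_iff_support_of_nonneg (fun u => (hpos u).le) (integrable_mul_exp_add_exp hA hB),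
    Function.support_eq_univ fun u => (hpos u).ne', Real.volume_univ]
  exact ENNReal.zero_lt_top

end expWeight

theorem integrable_conv_and_abs_integral_le {k f κ : ℝ → ℝ} {A B K M : ℝ}
    (hk : Measurable k) (hf : Measurable f)
    (hκ : Integrable fun u => κ u * (exp (-A * u) + exp (-B * u)))
    (hkκ : ∀ u, |k u| ≤ K * κ u) (hfw : ∀ y, |f y| ≤ M * expWeight A B y) (x : ℝ) :
    Integrable (fun y => k (x - y) * f y) ∧
      |∫ y, k (x - y) * f y| ≤
        K * M * (∫ u, κ u * (exp (-A * u) + exp (-B * u))) * expWeight A B x := by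
  set g : ℝ → ℝ := fun u => κ u * (exp (-A * u) + exp (-B * u))
  have hM : 0 ≤ M := nonneg_of_mul_nonneg_left ((abs_nonneg _).trans (hfw 0)) (expWeight.pos 0)
  have hdom : ∀ y, ‖k (x - y) * f y‖ ≤ K * M * expWeight A B x * g (x - y) := by
    intro y
    have hw : expWeight A B y ≤ expWeight A B x * (exp (-A * (x - y)) + exp (-B * (x - y))) := by
      have := expWeight.add_le (p := A) (q := B) x (y - x)
      rwa [add_sub_cancel, show A * (y - x) = -A * (x - y) by ring,
        show B * (y - x) = -B * (x - y) by ring] at this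
    rw [norm_mul, Real.norm_eq_abs, Real.norm_eq_abs]
    calc |k (x - y)| * |f y| ≤ K * κ (x - y) * (M * expWeight A B y) :=
          mul_le_mul (hkκ _) (hfw y) (abs_nonneg _) ((abs_nonneg _).trans (hkκ _))
      _ ≤ K * κ (x - y) * (M * (expWeight A B x * (exp (-A * (x - y)) + exp (-B * (x - y))))) := by
          gcongr
          exact (abs_nonneg _).trans (hkκ _)
      _ = K * M * expWeight A B x * g (x - y) := by ring
  have hdomInt : Integrable fun y => K * M * expWeight A B x * g (x - y) :=
    (hκ.comp_sub_left x).const_mul _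
  have hint : Integrable fun y => k (x - y) * f y :=
    hdomInt.mono' ((hk.comp (measurable_const.sub measurable_id)).mul hf).aestronglyMeasurable
      (Filter.Eventually.of_forall hdom)
  refine ⟨hint, ?_⟩
  calc |∫ y, k (x - y) * f y| ≤ ∫ y, ‖k (x - y) * f y‖ := by
        rw [← Real.norm_eq_abs]; exact norm_integral_le_integral_norm _
    _ ≤ ∫ y, K * M * expWeight A B x * g (x - y) := integral_mono hint.norm hdomInt hdom
    _ = K * M * (∫ u, g u) * expWeight A B x := by
      rw [integral_const_mul, integral_sub_left_eq_self g volume x]; ring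

lemma abs_le_expWeight_of_abs_le_expWeight_mul_cube {h : ℝ → ℝ} {ℓ p q δ : ℝ} (hℓ : 0 ≤ ℓ)
    (hδ : 0 < δ) (hh : ∀ u, |h u| ≤ ℓ * expWeight p q u * (1 + |u| ^ 3)) (u : ℝ) :
    |h u| ≤ ℓ * (1 + 6 / δ ^ 3) * expWeight (p - δ) (q + δ) u :=
  calc |h u| ≤ ℓ * expWeight p q u * (1 + |u| ^ 3) := hh u
    _ ≤ ℓ * expWeight p q u * ((1 + 6 / δ ^ 3) * exp (δ * |u|)) := by
      have := expWeight.pos (p := p) (q := q) u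
      gcongr
      exact one_add_pow_three_le_mul_exp hδ (abs_nonneg u)
    _ = ℓ * (1 + 6 / δ ^ 3) * expWeight (p - δ) (q + δ) u := by
      rw [← expWeight.mul_exp_abs]; ring

lemma exists_pos_add_lt_and_lt_sub {a b x y : ℝ} (hx : a < x ∧ x < b) (hy : a < y ∧ y < b) :
    ∃ δ > 0, (a + δ < x ∧ x < b - δ) ∧ (a + δ < y ∧ y < b - δ) := by
  set m := min (min (x - a) (b - x)) (min (y - a) (b - y))
  have hm : 0 < m := lt_min (lt_min (by linarith) (by linarith)) (lt_min (by linarith) (by linarith))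
  refine ⟨m / 2, by positivity, ⟨?_, ?_⟩, ?_, ?_⟩ <;>
    linarith [min_le_left (min (x - a) (b - x)) (min (y - a) (b - y)),
      min_le_right (min (x - a) (b - x)) (min (y - a) (b - y)),
      min_le_left (x - a) (b - x), min_le_right (x - a) (b - x),
      min_le_left (y - a) (b - y), min_le_right (y - a) (b - y)]

theorem stmt16 (A B : ℝ) (hA1 : -5/2 < A) (hA2 : A < 1) (hB1 : -5/2 < B) (hB2 : B < 1) :
    ∃ C : ℝ, 0 < C ∧ ∀ ℓ : ℝ, 0 < ℓ → ∀ h : ℝ → ℝ, Measurable h →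
      (∀ x : ℝ, x < 0 → |h x| ≤ ℓ * Real.exp x * (1 + |x| ^ 3)) →
      (∀ x : ℝ, 0 ≤ x → |h x| ≤ ℓ * Real.exp (-(5 * x) / 2) * (1 + |x| ^ 3)) →
      ∀ N : ℝ, 0 < N → ∀ f₀ : ℝ → ℝ, Measurable f₀ →
      (∀ x : ℝ, x < 0 → |f₀ x| ≤ N * Real.exp (A * x)) →
      (∀ x : ℝ, 0 ≤ x → |f₀ x| ≤ N * Real.exp (B * x)) →
      -- the convolution is absolutely convergent for every `x`
      (∀ x : ℝ, Integrable (fun y => h (x - y) * f₀ y)) ∧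
      (∀ x : ℝ, x < 0 → |∫ y, h (x - y) * f₀ y| ≤ C * ℓ * N * Real.exp (A * x)) ∧
      (∀ x : ℝ, 0 ≤ x → |∫ y, h (x - y) * f₀ y| ≤ C * ℓ * N * Real.exp (B * x)) := by
  obtain ⟨δ, hδ, hδA, hδB⟩ := exists_pos_add_lt_and_lt_sub ⟨hA1, hA2⟩ ⟨hB1, hB2⟩
  set κ := expWeight (1 - δ) (-5/2 + δ)
  refine ⟨(1 + 6 / δ ^ 3) * ∫ u, κ u * (exp (-A * u) + exp (-B * u)), ?_, ?_⟩
  · have := expWeight.integral_mul_exp_add_exp_pos hδA hδB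
    positivity
  intro ℓ hℓ h hhm hneg hpos N _ f₀ hf hfneg hfpos
  have hhκ : ∀ u, |h u| ≤ ℓ * (1 + 6 / δ ^ 3) * κ u := by
    refine abs_le_expWeight_of_abs_le_expWeight_mul_cube hℓ.le hδ fun u => ?_
    rcases lt_or_ge u 0 with hu | hu
    · simpa only [expWeight.of_neg hu, one_mul] using hneg u hu
    · rw [expWeight.of_nonneg hu]
      convert hpos u hu using 4
      ring
  have hfw : ∀ y, |f₀ y| ≤ N * expWeight A B y := by
    intro y
    rcases lt_or_ge y 0 with hy | hy
    · simpa only [expWeight.of_neg hy] using hfneg y hy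
    · simpa only [expWeight.of_nonneg hy] using hfpos y hy
  have hconv := integrable_conv_and_abs_integral_le hhm hf
    (expWeight.integrable_mul_exp_add_exp hδA hδB) hhκ hfw
  refine ⟨fun x => (hconv x).1, fun x hx => ?_, fun x hx => ?_⟩
  · rw [← expWeight.of_neg (q := B) hx]
    exact (hconv x).2.trans_eq (by ring)
  · rw [← expWeight.of_nonneg (p := A) hx]
    exact (hconv x).2.trans_eq (by ring)
end

section
/- Let ℓ > 0 and let h : ℝ → ℝ be measurable with |h(x)| ≤ ℓ e^{x} (1+|x|³) for x < 0 and |h(x)| ≤ ℓ e^{−5x/2} (1+|x|³) for x ≥ 0. Let −1/2 < A < 1 and −5/2 < B < −1/2, let N > 0, and let f₀ be measurable with |f₀(x)| ≤ N e^{Ax} for x < 0 and |f₀(x)| ≤ N e^{Bx} for x ≥ 0. Then ∫_ℝ |(h∗f₀)(x)| e^{x/2} dx ≤ C ℓ N for a constant C = C(A,B) > 0; in particular h∗f₀ ∈ L¹(ℝ, e^{x/2} dx). -/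
/-!
The weight `e^{x/2}` is multiplicative, so `(h ∗ f₀) e^{x/2} = (h e^{x/2}) ∗ (f₀ e^{x/2})`, and
Tonelli (Young's inequality in `L¹`) bounds the weighted `L¹` norm of the convolution by the
product of the weighted `L¹` norms of `h` and `f₀`. The cubic factor in the bound on `h` is
absorbed into `e^{|x|/4}`, after which both weighted functions are dominated by two-sided
exponentials `e^{αx}` (`x < 0`) and `e^{βx}` (`x ≥ 0`) with `α > 0 > β`, which are integrable.
-/

open MeasureTheory
open scoped ENNReal

section Convolution

variable {G : Type*} [MeasurableSpace G] [AddGroup G] {μ : Measure G} {f g : G → ℝ}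

theorem lintegral_enorm_convolution_le [MeasurableAdd₂ G] [MeasurableNeg G] [SFinite μ]
    [μ.IsAddRightInvariant] (hf : Measurable f) (hg : Measurable g) :
    ∫⁻ x, ‖∫ y, f (x - y) * g y ∂μ‖ₑ ∂μ ≤ (∫⁻ x, ‖f x‖ₑ ∂μ) * ∫⁻ y, ‖g y‖ₑ ∂μ := by
  have hprod : Measurable fun p : G × G => ‖f (p.1 - p.2)‖ₑ * ‖g p.2‖ₑ :=
    (hf.comp (measurable_fst.sub measurable_snd)).enorm.mul (hg.comp measurable_snd).enorm
  calc ∫⁻ x, ‖∫ y, f (x - y) * g y ∂μ‖ₑ ∂μ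
      ≤ ∫⁻ x, ∫⁻ y, ‖f (x - y)‖ₑ * ‖g y‖ₑ ∂μ ∂μ := lintegral_mono fun x =>
        (enorm_integral_le_lintegral_enorm _).trans_eq (by simp only [enorm_mul])
    _ = ∫⁻ y, ∫⁻ x, ‖f (x - y)‖ₑ * ‖g y‖ₑ ∂μ ∂μ := lintegral_lintegral_swap hprod.aemeasurable
    _ = ∫⁻ y, (∫⁻ x, ‖f x‖ₑ ∂μ) * ‖g y‖ₑ ∂μ := by
        refine lintegral_congr fun y => ?_
        rw [lintegral_mul_const (f := fun x => ‖f (x - y)‖ₑ) _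
            (hf.comp (measurable_id.sub_const y)).enorm,
          lintegral_sub_right_eq_self (fun x => ‖f x‖ₑ) y]
    _ = (∫⁻ x, ‖f x‖ₑ ∂μ) * ∫⁻ y, ‖g y‖ₑ ∂μ := lintegral_const_mul _ hg.enorm

theorem integral_convolution_mul_weight {w : G → ℝ} (hw : ∀ a b, w (a + b) = w a * w b) (x : G) :
    (∫ y, f (x - y) * g y ∂μ) * w x = ∫ y, (f (x - y) * w (x - y)) * (g y * w y) ∂μ := by
  rw [← integral_mul_const]
  refine integral_congr_ae (Filter.Eventually.of_forall fun y => ?_)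
  simp only
  rw [show w x = w (x - y) * w y by rw [← hw, sub_add_cancel]]
  ring

theorem lintegral_enorm_convolution_mul_weight_le [MeasurableAdd₂ G] [MeasurableNeg G] [SFinite μ]
    [μ.IsAddRightInvariant] {w : G → ℝ} (hw : ∀ a b, w (a + b) = w a * w b)
    (hwm : Measurable w) (hf : Measurable f) (hg : Measurable g) :
    ∫⁻ x, ‖(∫ y, f (x - y) * g y ∂μ) * w x‖ₑ ∂μ ≤
      (∫⁻ x, ‖f x * w x‖ₑ ∂μ) * ∫⁻ y, ‖g y * w y‖ₑ ∂μ := by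
  simp_rw [integral_convolution_mul_weight hw]
  exact lintegral_enorm_convolution_le (hf.mul hwm) (hg.mul hwm)

end Convolution

-- `(t/4)³/3! ≤ e^{t/4}` gives `t³ ≤ 384 e^{t/4}`.
theorem one_add_pow_three_le_exp {t : ℝ} (ht : 0 ≤ t) : 1 + t ^ 3 ≤ 385 * Real.exp (t / 4) := by
  have hcube := Real.pow_div_factorial_le_exp (t / 4) (by positivity) 3
  have hone := Real.one_le_exp (show 0 ≤ t / 4 by positivity)
  norm_num [Nat.factorial] at hcube
  nlinarith

theorem mul_exp_mul_one_add_abs_pow_three_le {K : ℝ} (hK : 0 ≤ K) (u x : ℝ) :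
    K * Real.exp u * (1 + |x| ^ 3) ≤ 385 * K * Real.exp (u + |x| / 4) := by
  calc K * Real.exp u * (1 + |x| ^ 3) ≤ K * Real.exp u * (385 * Real.exp (|x| / 4)) := by
        gcongr; exact one_add_pow_three_le_exp (abs_nonneg x)
    _ = 385 * K * Real.exp (u + |x| / 4) := by rw [Real.exp_add]; ring

theorem lintegral_ofReal_const_mul_exp_mul_Iic {K a : ℝ} (hK : 0 ≤ K) (ha : 0 < a) :
    ∫⁻ x in Set.Iic 0, ENNReal.ofReal (K * Real.exp (a * x)) = ENNReal.ofReal (K / a) := by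
  rw [← ofReal_integral_eq_lintegral_ofReal ((integrableOn_exp_mul_Iic ha 0).const_mul K)
    (ae_of_all _ fun x => by positivity), integral_const_mul, integral_exp_mul_Iic ha]
  simp [div_eq_mul_inv]

theorem lintegral_ofReal_const_mul_exp_mul_Ioi {K b : ℝ} (hK : 0 ≤ K) (hb : b < 0) :
    ∫⁻ x in Set.Ioi 0, ENNReal.ofReal (K * Real.exp (b * x)) = ENNReal.ofReal (-(K / b)) := by
  rw [← ofReal_integral_eq_lintegral_ofReal ((integrableOn_exp_mul_Ioi hb 0).const_mul K)
    (ae_of_all _ fun x => by positivity), integral_const_mul, integral_exp_mul_Ioi hb]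
  simp [div_eq_mul_inv]

theorem enorm_mul_exp_le {F : ℝ → ℝ} {K a x : ℝ} (hx : |F x| ≤ K * Real.exp (a * x)) (c : ℝ) :
    ‖F x * Real.exp (c * x)‖ₑ ≤ ENNReal.ofReal (K * Real.exp ((a + c) * x)) := by
  rw [Real.enorm_eq_ofReal_abs, abs_mul, Real.abs_exp, add_mul, Real.exp_add, ← mul_assoc]
  gcongr

theorem lintegral_enorm_mul_exp_le_of_two_sided {F : ℝ → ℝ} {K a b c : ℝ} (ha : -c < a)
    (hb : b < -c) (hneg : ∀ x < 0, |F x| ≤ K * Real.exp (a * x))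
    (hpos : ∀ x, 0 ≤ x → |F x| ≤ K * Real.exp (b * x)) :
    ∫⁻ x, ‖F x * Real.exp (c * x)‖ₑ ≤ ENNReal.ofReal (K * (1 / (a + c) - 1 / (b + c))) := by
  have hF0 : |F 0| ≤ K := by simpa using hpos 0 le_rfl
  have hK : 0 ≤ K := (abs_nonneg _).trans hF0
  have hnonpos : ∀ x ∈ Set.Iic (0 : ℝ), |F x| ≤ K * Real.exp (a * x) := by
    intro x hx
    rcases (Set.mem_Iic.mp hx).lt_or_eq with hlt | rfl
    · exact hneg x hlt
    · simpa using hF0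
  rw [← lintegral_add_compl _ (measurableSet_Iic (a := (0 : ℝ))), Set.compl_Iic]
  calc (∫⁻ x in Set.Iic 0, ‖F x * Real.exp (c * x)‖ₑ) +
        ∫⁻ x in Set.Ioi 0, ‖F x * Real.exp (c * x)‖ₑ
      ≤ (∫⁻ x in Set.Iic 0, ENNReal.ofReal (K * Real.exp ((a + c) * x))) +
          ∫⁻ x in Set.Ioi 0, ENNReal.ofReal (K * Real.exp ((b + c) * x)) := by
        refine add_le_add (setLIntegral_mono (by fun_prop) fun x hx => ?_)
          (setLIntegral_mono (by fun_prop) fun x hx => ?_)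
        · exact enorm_mul_exp_le (hnonpos x hx) c
        · exact enorm_mul_exp_le (hpos x (le_of_lt hx)) c
    _ = ENNReal.ofReal (K / (a + c)) + ENNReal.ofReal (-(K / (b + c))) := by
        rw [lintegral_ofReal_const_mul_exp_mul_Iic hK (by linarith),
          lintegral_ofReal_const_mul_exp_mul_Ioi hK (by linarith)]
    _ = ENNReal.ofReal (K * (1 / (a + c) - 1 / (b + c))) := by
        have hac : 0 ≤ K / (a + c) := div_nonneg hK (by linarith)
        have hbc : 0 ≤ -(K / (b + c)) :=
          neg_nonneg.mpr (div_nonpos_of_nonneg_of_nonpos hK (by linarith))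
        rw [← ENNReal.ofReal_add hac hbc]
        ring_nf

theorem stmt17_general (A B : ℝ) (hA1 : -1/2 < A) (hB2 : B < -1/2) :
    ∃ C : ℝ, 0 < C ∧ ∀ ℓ : ℝ, 0 < ℓ → ∀ h : ℝ → ℝ, Measurable h →
      (∀ x : ℝ, x < 0 → |h x| ≤ ℓ * Real.exp x * (1 + |x| ^ 3)) →
      (∀ x : ℝ, 0 ≤ x → |h x| ≤ ℓ * Real.exp (-(5 * x) / 2) * (1 + |x| ^ 3)) →
      ∀ N : ℝ, 0 < N → ∀ f₀ : ℝ → ℝ, Measurable f₀ →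
      (∀ x : ℝ, x < 0 → |f₀ x| ≤ N * Real.exp (A * x)) →
      (∀ x : ℝ, 0 ≤ x → |f₀ x| ≤ N * Real.exp (B * x)) →
      -- `∫ |(h∗f₀)(x)| e^{x/2} dx ≤ C ℓ N`
      (∫⁻ x : ℝ, ENNReal.ofReal (|∫ y, h (x - y) * f₀ y| * Real.exp (x / 2))) ≤
        ENNReal.ofReal (C * ℓ * N) ∧
      -- in particular `h ∗ f₀ ∈ L¹(ℝ, e^{x/2} dx)`
      Integrable (fun x => (∫ y, h (x - y) * f₀ y) * Real.exp (x / 2)) := by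
  set C := 385 * (1 / (3 / 4 + 2⁻¹) - 1 / (-9 / 4 + 2⁻¹)) * (1 / (A + 2⁻¹) - 1 / (B + 2⁻¹))
    with hC
  have hA : 0 < 1 / (A + 2⁻¹) := one_div_pos.mpr (by linarith)
  have hB : 1 / (B + 2⁻¹) < 0 := one_div_neg.mpr (by linarith)
  refine ⟨C, mul_pos (by norm_num) (by linarith), ?_⟩
  intro ℓ hℓ h hh hh_neg hh_pos N hN f₀ hf₀ hf₀_neg hf₀_pos
  have hh_neg' : ∀ x < 0, |h x| ≤ 385 * ℓ * Real.exp (3 / 4 * x) := fun x hx =>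
    (hh_neg x hx).trans <| (mul_exp_mul_one_add_abs_pow_three_le hℓ.le x x).trans_eq <| by
      rw [abs_of_neg hx]; ring_nf
  have hh_pos' : ∀ x, 0 ≤ x → |h x| ≤ 385 * ℓ * Real.exp (-9 / 4 * x) := fun x hx =>
    (hh_pos x hx).trans <| (mul_exp_mul_one_add_abs_pow_three_le hℓ.le _ x).trans_eq <| by
      rw [abs_of_nonneg hx]; ring_nf
  have hweight (a b : ℝ) : Real.exp ((a + b) / 2) = Real.exp (a / 2) * Real.exp (b / 2) := by
    rw [← Real.exp_add, add_div]
  have hbound : ∫⁻ x, ‖(∫ y, h (x - y) * f₀ y) * Real.exp (x / 2)‖ₑ ≤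
      ENNReal.ofReal (C * ℓ * N) := calc
    _ ≤ (∫⁻ x, ‖h x * Real.exp (x / 2)‖ₑ) * ∫⁻ y, ‖f₀ y * Real.exp (y / 2)‖ₑ :=
        lintegral_enorm_convolution_mul_weight_le hweight (by fun_prop) hh hf₀
    _ ≤ ENNReal.ofReal (385 * ℓ * (1 / (3 / 4 + 2⁻¹) - 1 / (-9 / 4 + 2⁻¹))) *
          ENNReal.ofReal (N * (1 / (A + 2⁻¹) - 1 / (B + 2⁻¹))) := by
        simp_rw [div_eq_inv_mul _ (2 : ℝ)]
        gcongr
        · exact lintegral_enorm_mul_exp_le_of_two_sided (by norm_num) (by norm_num) hh_neg' hh_pos'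
        · exact lintegral_enorm_mul_exp_le_of_two_sided (by linarith) (by linarith)
            hf₀_neg hf₀_pos
    _ = ENNReal.ofReal (C * ℓ * N) := by
        rw [← ENNReal.ofReal_mul (by positivity), hC]
        ring_nf
  have hmeas : AEStronglyMeasurable (fun x => (∫ y, h (x - y) * f₀ y) * Real.exp (x / 2)) :=
    (((hh.comp (measurable_fst.sub measurable_snd)).mul
      (hf₀.comp measurable_snd)).stronglyMeasurable.integral_prod_right'.mul
        (by fun_prop : Measurable fun x : ℝ => Real.exp (x / 2)).stronglyMeasurable
      ).aestronglyMeasurable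
  refine ⟨?_, hmeas, hbound.trans_lt ENNReal.ofReal_lt_top⟩
  simpa only [Real.enorm_eq_ofReal_abs, abs_mul, Real.abs_exp] using hbound

theorem stmt17 (A B : ℝ) (hA1 : -1/2 < A) (hA2 : A < 1) (hB1 : -5/2 < B) (hB2 : B < -1/2) :
    ∃ C : ℝ, 0 < C ∧ ∀ ℓ : ℝ, 0 < ℓ → ∀ h : ℝ → ℝ, Measurable h →
      (∀ x : ℝ, x < 0 → |h x| ≤ ℓ * Real.exp x * (1 + |x| ^ 3)) →
      (∀ x : ℝ, 0 ≤ x → |h x| ≤ ℓ * Real.exp (-(5 * x) / 2) * (1 + |x| ^ 3)) →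
      ∀ N : ℝ, 0 < N → ∀ f₀ : ℝ → ℝ, Measurable f₀ →
      (∀ x : ℝ, x < 0 → |f₀ x| ≤ N * Real.exp (A * x)) →
      (∀ x : ℝ, 0 ≤ x → |f₀ x| ≤ N * Real.exp (B * x)) →
      -- `∫ |(h∗f₀)(x)| e^{x/2} dx ≤ C ℓ N`
      (∫⁻ x : ℝ, ENNReal.ofReal (|∫ y, h (x - y) * f₀ y| * Real.exp (x / 2))) ≤
        ENNReal.ofReal (C * ℓ * N) ∧
      -- in particular `h ∗ f₀ ∈ L¹(ℝ, e^{x/2} dx)`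
      Integrable (fun x => (∫ y, h (x - y) * f₀ y) * Real.exp (x / 2)) :=
  stmt17_general A B hA1 hB2
end

section
/- Let r ∈ ℝ, γ ∈ ℝ, and let K, f₀ : ℝ → ℝ be measurable with ∫_ℝ |K(x)| e^{rx} dx < ∞ and ∫_ℝ |f₀(x)| e^{rx} dx < ∞. Then for every t ≥ 0 the series f(t) = e^{γt} Σ_{n≥0} (tⁿ/n!) K^{*n} ∗ f₀ converges absolutely in L¹(ℝ, e^{rx} dx) and ∫_ℝ f(t,x) e^{rx} dx = e^{(γ + M_r) t} ∫_ℝ f₀(x) e^{rx} dx, where M_r = ∫_ℝ K(x) e^{rx} dx. In particular, if γ + M_r = 0 then the moment ∫ f(t,x) e^{rx} dx is constant in time (for r = 1/2 this is the conservation of wave action along solutions of the linearized wave kinetic equation), and if γ + M_r > 0 it grows exponentially at rate γ + M_r. -/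
/-!
Multiplication by the weight `e^{rx}` commutes with convolution, so everything reduces to
unweighted kernels `K, f₀ ∈ L¹(ℝ)`. There `∫ (f ⋆ g) = ∫ f * ∫ g` and `‖f ⋆ g‖₁ ≤ ‖f‖₁ ‖g‖₁`,
so `K^{*n} ∗ f₀` has integral `(∫ K)ⁿ ∫ f₀` and `L¹` norm at most `‖K‖₁ⁿ ‖f₀‖₁`. The series
is therefore dominated by an exponential series, may be integrated term by term, and sums to
`e^{t ∫ K} ∫ f₀`.
-/

open MeasureTheory

/-- `iterConv K n` is the `(n+1)`-fold convolution `K^{*(n+1)}` of `K` with itself,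
so `iterConv K 0 = K^{*1} = K`. -/
noncomputable def iterConv (K : ℝ → ℝ) : ℕ → ℝ → ℝ
  | 0 => K
  | n + 1 => fun x => ∫ y, iterConv K n (x - y) * K y

/-- The solution `f(t) = e^{γt} Σ_{n≥0} (tⁿ/n!) K^{*n} ∗ f₀` of the linearized
wave kinetic equation `∂_t f = γ f + K ∗ f`, defined pointwise (the `n = 0` term
being `f₀` itself). -/
noncomputable def solFun (K : ℝ → ℝ) (γ : ℝ) (f₀ : ℝ → ℝ) (t x : ℝ) : ℝ :=
  Real.exp (γ * t) * (f₀ x +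
    ∑' n : ℕ, (t ^ (n + 1) / (Nat.factorial (n + 1) : ℝ)) *
      ∫ y, iterConv K n (x - y) * f₀ y)

open scoped Convolution
open ContinuousLinearMap (lsmul)
open Real
open scoped Nat

section L1

variable {G : Type*} [AddGroup G] [MeasurableSpace G] {μ : Measure G} {f g : G → ℝ}

theorem abs_convolution_le (x : G) :
    |(f ⋆[lsmul ℝ ℝ, μ] g) x| ≤ ((fun y => |f y|) ⋆[lsmul ℝ ℝ, μ] fun y => |g y|) x := by
  simp only [convolution_def, ContinuousLinearMap.lsmul_apply, smul_eq_mul, ← abs_mul]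
  exact abs_integral_le_integral_abs

variable [MeasurableAdd₂ G] [MeasurableNeg G] [SFinite μ] [μ.IsAddRightInvariant]

theorem integral_abs_convolution_le (hf : Integrable f μ) (hg : Integrable g μ) :
    ∫ x, |(f ⋆[lsmul ℝ ℝ, μ] g) x| ∂μ ≤ (∫ x, |f x| ∂μ) * ∫ x, |g x| ∂μ :=
  calc ∫ x, |(f ⋆[lsmul ℝ ℝ, μ] g) x| ∂μ
      ≤ ∫ x, ((fun y => |f y|) ⋆[lsmul ℝ ℝ, μ] fun y => |g y|) x ∂μ :=
        integral_mono (hf.integrable_convolution _ hg).abs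
          (hf.abs.integrable_convolution _ hg.abs) abs_convolution_le
    _ = (∫ x, |f x| ∂μ) * ∫ x, |g x| ∂μ := integral_convolution _ hf.abs hg.abs

end L1

theorem integral_mul_sub_eq_convolution (F G : ℝ → ℝ) :
    (fun x => ∫ y, F (x - y) * G y) = G ⋆ F := by
  funext x
  exact integral_congr_ae (.of_forall fun y => mul_comm _ _)

theorem convolution_mul_exp (f g : ℝ → ℝ) (r : ℝ) :
    ((fun x => f x * exp (r * x)) ⋆ fun x => g x * exp (r * x)) =
      fun x => (f ⋆ g) x * exp (r * x) := by
  funext x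
  simp only [convolution_def, ContinuousLinearMap.lsmul_apply, smul_eq_mul, ← integral_mul_const]
  refine integral_congr_ae (.of_forall fun y => ?_)
  have hexp : exp (r * y) * exp (r * (x - y)) = exp (r * x) := by rw [← exp_add]; ring_nf
  linear_combination f y * g (x - y) * hexp

theorem iterConv_succ (K : ℝ → ℝ) (n : ℕ) : iterConv K (n + 1) = K ⋆ iterConv K n :=
  integral_mul_sub_eq_convolution _ _

theorem iterConv_mul_exp (K : ℝ → ℝ) (r : ℝ) (n : ℕ) :
    iterConv (fun x => K x * exp (r * x)) n = fun x => iterConv K n x * exp (r * x) := by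
  induction n with
  | zero => rfl
  | succ n ih => rw [iterConv_succ, ih, convolution_mul_exp, iterConv_succ]

section Integrable

variable {K : ℝ → ℝ} (hK : Integrable K)
include hK

theorem integrable_iterConv (n : ℕ) : Integrable (iterConv K n) := by
  induction n with
  | zero => exact hK
  | succ n ih => rw [iterConv_succ]; exact hK.integrable_convolution _ ih

theorem integral_iterConv (n : ℕ) : ∫ x, iterConv K n x = (∫ x, K x) ^ (n + 1) := by
  induction n with
  | zero => simp [iterConv]
  | succ n ih =>
    rw [iterConv_succ, integral_convolution _ hK (integrable_iterConv hK n), ih]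
    simp [pow_succ']

theorem integral_abs_iterConv_le (n : ℕ) : ∫ x, |iterConv K n x| ≤ (∫ x, |K x|) ^ (n + 1) := by
  induction n with
  | zero => simp [iterConv]
  | succ n ih =>
    rw [iterConv_succ, pow_succ']
    exact (integral_abs_convolution_le hK (integrable_iterConv hK n)).trans
      (mul_le_mul_of_nonneg_left ih (integral_nonneg fun x => abs_nonneg _))

end Integrable

section SeriesIntegral

variable {α E : Type*} [MeasurableSpace α] {μ : Measure α}
  [NormedAddCommGroup E] [CompleteSpace E]

theorem ae_summable_of_summable_integral_norm {ι : Type*} [Countable ι] {F : ι → α → E}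
    (hF : ∀ i, Integrable (F i) μ) (hsum : Summable fun i => ∫ a, ‖F i a‖ ∂μ) :
    ∀ᵐ a ∂μ, Summable fun i => F i a := by
  have hnorm : ∑' i, eLpNorm (F i) 1 μ ≠ ⊤ := by
    simp_rw [eLpNorm_one_eq_lintegral_enorm,
      ← fun i => ofReal_integral_norm_eq_lintegral_enorm (hF i),
      ← ENNReal.ofReal_tsum_of_nonneg (fun i => integral_nonneg fun a => norm_nonneg _) hsum]
    exact ENNReal.ofReal_ne_top
  filter_upwards [summable_norm_of_tsum_eLpNorm_ne_top le_rfl (fun i => (hF i).1) hnorm]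
    with a ha using ha.of_norm

variable [NormedSpace ℝ E]

theorem integral_add_tsum_of_summable_integral_norm {f : α → E} {F : ℕ → α → E}
    (hf : Integrable f μ) (hF : ∀ n, Integrable (F n) μ)
    (hsum : Summable fun n => ∫ a, ‖F n a‖ ∂μ) :
    ∫ a, (f a + ∑' n, F n a) ∂μ = ∫ a, f a ∂μ + ∑' n, ∫ a, F n a ∂μ := by
  let F' : ℕ → α → E := fun n => Nat.casesOn n f F
  have hF' : ∀ n, Integrable (F' n) μ := fun n => by cases n <;> simp [F', hf, hF]
  have hsum' : Summable fun n => ∫ a, ‖F' n a‖ ∂μ := (summable_nat_add_iff 1).1 hsum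
  -- `f a + ∑' n, F n a` merges into one `tsum` only where the series converges.
  have hpt : ∀ᵐ a ∂μ, f a + ∑' n, F n a = ∑' n, F' n a := by
    filter_upwards [ae_summable_of_summable_integral_norm hF' hsum'] with a ha
    exact (ha.tsum_eq_zero_add).symm
  rw [integral_congr_ae hpt, ← integral_tsum_of_summable_integral_norm hF' hsum',
    (hsum'.of_norm_bounded fun n => norm_integral_le_integral_norm _).tsum_eq_zero_add]
  rfl

end SeriesIntegral

section Series

variable {K f : ℝ → ℝ} (hK : Integrable K) (hf : Integrable f)
include hK hf

theorem integral_abs_convolution_iterConv_le (n : ℕ) :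
    ∫ x, |(f ⋆ iterConv K n) x| ≤ (∫ x, |f x|) * (∫ x, |K x|) ^ (n + 1) :=
  (integral_abs_convolution_le hf (integrable_iterConv hK n)).trans <|
    mul_le_mul_of_nonneg_left (integral_abs_iterConv_le hK n)
      (integral_nonneg fun _ => abs_nonneg _)

theorem summable_pow_div_factorial_mul_integral_abs_convolution_iterConv (t : ℝ) :
    Summable fun n : ℕ => |t| ^ (n + 1) / ((n + 1)! : ℝ) * ∫ x, |(f ⋆ iterConv K n) x| := by
  have hexp := ((Real.summable_pow_div_factorial (|t| * ∫ x, |K x|)).comp_injective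
    Nat.succ_injective).mul_left (∫ x, |f x|)
  refine hexp.of_nonneg_of_le (fun n => by positivity) fun n => ?_
  calc |t| ^ (n + 1) / ((n + 1)! : ℝ) * ∫ x, |(f ⋆ iterConv K n) x|
      ≤ |t| ^ (n + 1) / ((n + 1)! : ℝ) * ((∫ x, |f x|) * (∫ x, |K x|) ^ (n + 1)) := by
        gcongr; exact integral_abs_convolution_iterConv_le hK hf n
    _ = _ := by simp only [Function.comp_apply, Nat.succ_eq_add_one, mul_pow]; ring

theorem integral_add_tsum_convolution_iterConv (t : ℝ) :
    ∫ x, (f x + ∑' n : ℕ, t ^ (n + 1) / ((n + 1)! : ℝ) * (f ⋆ iterConv K n) x) =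
      exp (t * ∫ x, K x) * ∫ x, f x := by
  have hint (n : ℕ) : Integrable fun x => t ^ (n + 1) / ((n + 1)! : ℝ) * (f ⋆ iterConv K n) x :=
    (hf.integrable_convolution _ (integrable_iterConv hK n)).const_mul _
  have hnorm : Summable fun n : ℕ =>
      ∫ x, ‖t ^ (n + 1) / ((n + 1)! : ℝ) * (f ⋆ iterConv K n) x‖ := by
    simpa [norm_mul, abs_div, abs_pow, integral_const_mul] using
      summable_pow_div_factorial_mul_integral_abs_convolution_iterConv hK hf t
  have hterm (n : ℕ) : ∫ x, t ^ (n + 1) / ((n + 1)! : ℝ) * (f ⋆ iterConv K n) x =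
      (t * ∫ x, K x) ^ (n + 1) / ((n + 1)! : ℝ) * ∫ x, f x := by
    rw [integral_const_mul, integral_convolution _ hf (integrable_iterConv hK n),
      integral_iterConv hK n, ContinuousLinearMap.lsmul_apply, smul_eq_mul, mul_pow]
    ring
  have hexp : HasSum (fun n : ℕ => (t * ∫ x, K x) ^ (n + 1) / ((n + 1)! : ℝ))
      (exp (t * ∫ x, K x) - 1) := by
    have := NormedSpace.expSeries_div_hasSum_exp (t * ∫ x, K x)
    rw [← Real.exp_eq_exp_ℝ] at this
    simpa using (hasSum_nat_add_iff' 1).2 this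
  rw [integral_add_tsum_of_summable_integral_norm hf hint hnorm, funext hterm,
    (hexp.mul_right _).tsum_eq]
  ring

end Series

theorem stmt18 (r γ : ℝ) (K f₀ : ℝ → ℝ) (hKm : Measurable K) (hf₀m : Measurable f₀)
    (hK : Integrable (fun x => |K x| * Real.exp (r * x)))
    (hf₀ : Integrable (fun x => |f₀ x| * Real.exp (r * x))) :
    -- the series converges absolutely in `L¹(ℝ, e^{rx} dx)`
    (∀ t : ℝ, 0 ≤ t → Summable (fun n : ℕ =>
      (t ^ (n + 1) / (Nat.factorial (n + 1) : ℝ)) *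
        ∫ x, |∫ y, iterConv K n (x - y) * f₀ y| * Real.exp (r * x))) ∧
    -- the exact evolution of the moment `∫ f(t,x) e^{rx} dx`
    (∀ t : ℝ, 0 ≤ t →
      (∫ x, solFun K γ f₀ t x * Real.exp (r * x)) =
        Real.exp ((γ + ∫ x, K x * Real.exp (r * x)) * t) *
          ∫ x, f₀ x * Real.exp (r * x)) ∧
    -- in particular, if `γ + M_r = 0` the moment is conserved
    (γ + (∫ x, K x * Real.exp (r * x)) = 0 → ∀ t : ℝ, 0 ≤ t →
      (∫ x, solFun K γ f₀ t x * Real.exp (r * x)) = ∫ x, f₀ x * Real.exp (r * x)) := by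
  set g := fun x => K x * exp (r * x)
  set h := fun x => f₀ x * exp (r * x)
  have hg : Integrable g :=
    (integrable_norm_iff (by fun_prop)).1 (by simpa [g, abs_mul] using hK)
  have hh : Integrable h :=
    (integrable_norm_iff (by fun_prop)).1 (by simpa [h, abs_mul] using hf₀)
  have hconv (n : ℕ) (x : ℝ) :
      (h ⋆ iterConv g n) x = (∫ y, iterConv K n (x - y) * f₀ y) * exp (r * x) := by
    rw [iterConv_mul_exp, convolution_mul_exp, ← integral_mul_sub_eq_convolution]
  have hsol (t x : ℝ) : solFun K γ f₀ t x * exp (r * x) =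
      exp (γ * t) * (h x + ∑' n : ℕ, t ^ (n + 1) / ((n + 1)! : ℝ) * (h ⋆ iterConv g n) x) := by
    simp only [solFun, hconv, ← mul_assoc, tsum_mul_right, h]
    ring
  have hmoment (t : ℝ) : ∫ x, solFun K γ f₀ t x * exp (r * x) =
      exp ((γ + ∫ x, g x) * t) * ∫ x, h x := by
    simp_rw [hsol, integral_const_mul, integral_add_tsum_convolution_iterConv hg hh, ← mul_assoc,
      ← exp_add]
    ring_nf
  refine ⟨fun t ht => ?_, fun t _ => hmoment t,
    fun hzero t _ => by rw [hmoment, hzero, zero_mul, exp_zero, one_mul]⟩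
  simpa [abs_of_nonneg ht, hconv, abs_mul] using
    summable_pow_div_factorial_mul_integral_abs_convolution_iterConv hg hh t
end
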